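/- arXiv:1711.03724 — 11 statements merged into one kernel-verified Lean document; each statement's English description precedes it below -/
import Mathlib

section
/- Let n ≥ 1 and let c : ℤ × ℤ → ℂ be a tame frieze pattern of height n over ℂ. Set m = n + 3 and c_k := c(k, k+2) for k ∈ ℤ. Then: (a) c is periodic with period m, i.e. c(i, j) = c(i+m, j+m) for all i, j ∈ ℤ with i ≤ j ≤ i+m; (b) for every i ∈ ℤ, the product η(c_i)·η(c_{i+1})⋯η(c_{i+m−1}) equals −I₂; and (c) for all i, j ∈ ℤ with i−1 ≤ j ≤ i+n, the entry c(i, j+2) equals the (1,1)-entry of the product η(c_i)·η(c_{i+1})⋯η(c_j) (the empty product for j = i−1 being the identity matrix). -/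
/-- The matrix `η(c) = !![c, -1; 1, 0]` over `ℂ`. -/
def eta (c : ℂ) : Matrix (Fin 2) (Fin 2) ℂ := !![c, -1; 1, 0]

/-- A frieze pattern of height `n` over a subset `S ⊆ ℂ`. -/
def IsFrieze (n : ℕ) (S : Set ℂ) (c : ℤ × ℤ → ℂ) : Prop :=
  (∀ i : ℤ, c (i, i) = 0) ∧
  (∀ i : ℤ, c (i, i + 1) = 1) ∧
  (∀ i : ℤ, c (i, i + n + 2) = 1) ∧
  (∀ i : ℤ, c (i, i + n + 3) = 0) ∧
  (∀ i j : ℤ, i + 2 ≤ j → j ≤ i + n + 1 → c (i, j) ∈ S) ∧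
  (∀ i j : ℤ, i + 1 ≤ j → j ≤ i + n + 2 →
    c (i, j) * c (i + 1, j + 1) - c (i, j + 1) * c (i + 1, j) = 1)

/-- A tame frieze pattern: all adjacent complete `3 × 3` submatrices have determinant `0`. -/
def IsTameFrieze (n : ℕ) (S : Set ℂ) (c : ℤ × ℤ → ℂ) : Prop :=
  IsFrieze n S c ∧
  ∀ i j : ℤ, i + 2 ≤ j → j ≤ i + n + 1 →
    Matrix.det (Matrix.of fun r s : Fin 3 => c (i + (r : ℕ), j + (s : ℕ))) = 0

/-!
Tameness forces every row of the frieze to satisfy the same linear recurrence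
`c(i, j + 2) = c_j c(i, j + 1) - c(i, j)`: in a vanishing adjacent `3 × 3` block the top row is a
combination of the two rows below it, whose left `2 × 2` minor is `1`. Consequently the partial
product `η(c_i) ⋯ η(c_{i+l})` is the `2 × 2` matrix of frieze entries in rows `i, i + 1`, which is (c).
At length `n + 3` the boundary rows of `0`s and `1`s make the product `-1` times a lower
unitriangular matrix when the last factor is split off, and `-1` times an upper unitriangular one
when the first is; so it is `-1`, which is (b). Comparing `η(c_i) P = -1 = P η(c_{i+n+3})` gives
`c_{i+n+3} = c_i`, and (a) follows from (c).
-/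

theorem Matrix.det_fin_three_of_lower_rows {R : Type*} [CommRing R] (M : Matrix (Fin 3) (Fin 3) R)
    (t : R) (h₁ : M 1 2 = t * M 1 1 - M 1 0) (h₂ : M 2 2 = t * M 2 1 - M 2 0) :
    M.det = (M 0 2 - (t * M 0 1 - M 0 0)) * (M 1 0 * M 2 1 - M 1 1 * M 2 0) := by
  rw [Matrix.det_fin_three, h₁, h₂]
  ring

def quiddity (c : ℤ × ℤ → ℂ) (k : ℤ) : ℂ := c (k, k + 2)

def etaProd (a : ℤ → ℂ) (i : ℤ) (l : ℕ) : Matrix (Fin 2) (Fin 2) ℂ :=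
  ((List.range l).map fun k : ℕ => eta (a (i + k))).prod

section etaProd

variable (a : ℤ → ℂ) (i : ℤ)

@[simp]
theorem etaProd_zero : etaProd a i 0 = 1 := rfl

theorem etaProd_succ (l : ℕ) : etaProd a i (l + 1) = etaProd a i l * eta (a (i + l)) :=
  List.prod_range_succ _ l

theorem etaProd_succ' (l : ℕ) : etaProd a i (l + 1) = eta (a i) * etaProd a (i + 1) l := by
  rw [etaProd, List.prod_range_succ', Nat.cast_zero, add_zero]
  congr 3 with k
  push_cast
  ring_nf

theorem etaProd_congr {b : ℤ → ℂ} {j : ℤ} (h : ∀ k : ℕ, a (i + k) = b (j + k)) (l : ℕ) :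
    etaProd a i l = etaProd b j l := by
  simp only [etaProd, h]

end etaProd

/-- Elaborated as in `stmt0`: `k : ℤ`, and `List.range l` is coerced to a list of integers. -/
theorem etaProd_quiddity_eq_list_prod (c : ℤ × ℤ → ℂ) (i : ℤ) (l : ℕ) :
    etaProd (quiddity c) i l = ((List.range l).map fun k => eta (c (i + k, i + k + 2))).prod := by
  simp only [etaProd, quiddity, bind_pure_comp, List.map_eq_map, List.map_map, Function.comp_def]

theorem eta_injective : Function.Injective eta := fun a b h => by
  simpa [eta] using congrFun₂ h 0 0

namespace IsTameFrieze

variable {n : ℕ} {S : Set ℂ} {c : ℤ × ℤ → ℂ}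

theorem entry_add_two (hf : IsTameFrieze n S c) {i j : ℤ} (hij : i ≤ j) (hj : j ≤ i + n + 1) :
    c (i, j + 2) = c (j, j + 2) * c (i, j + 1) - c (i, j) := by
  obtain ⟨⟨h0, h1, -, -, -, hu⟩, ht⟩ := hf
  suffices ∀ d : ℕ, ∀ i, i + d = j → j ≤ i + n + 1 →
      c (i, j + 2) = c (j, j + 2) * c (i, j + 1) - c (i, j) from
    this (j - i).toNat i (by omega) hj
  clear hij hj i
  intro d
  induction d using Nat.twoStepInduction with
  | zero =>
    intro i hi _
    obtain rfl : i = j := by simpa using hi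
    rw [h0, h1]; ring
  | one =>
    intro i hi _
    obtain rfl : j = i + 1 := by simpa using hi.symm
    have hu' := hu i (i + 2) (by omega) (by omega)
    have h1' := h1 (i + 1)
    rw [show i + 1 + 1 = i + 2 by ring] at h1' ⊢
    rw [show i + 2 + 1 = i + 1 + 2 by ring, h1'] at hu'
    rw [h1 i]
    linear_combination -hu'
  | more d ih₀ ih₁ =>
    intro i hi hj
    have hminor := hu (i + 1) j (by omega) (by omega)
    rw [show i + 1 + 1 = i + 2 by ring] at hminor
    have hdet := ht i j (by omega) (by omega)
    rw [Matrix.det_fin_three_of_lower_rows _ (c (j, j + 2))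
      (by simpa using ih₁ (i + 1) (by omega) (by omega))
      (by simpa using ih₀ (i + 2) (by omega) (by omega))] at hdet
    simp only [Matrix.of_apply, Fin.isValue, Fin.val_zero, Fin.val_one, Fin.val_two, Nat.cast_zero,
      Nat.cast_one, Nat.cast_ofNat, add_zero, hminor, mul_one, sub_eq_zero] at hdet
    exact hdet

theorem etaProd_quiddity_succ (hf : IsTameFrieze n S c) (i : ℤ) {l : ℕ} (hl : l ≤ n + 1) :
    etaProd (quiddity c) i (l + 1) =
      !![c (i, i + l + 2), -c (i, i + l + 1); c (i + 1, i + l + 2), -c (i + 1, i + l + 1)] := by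
  obtain ⟨⟨h0, h1, -⟩, -⟩ := id hf
  induction l with
  | zero =>
    have h1' := h1 (i + 1)
    rw [show i + 1 + 1 = i + 2 by ring] at h1'
    simp [etaProd_succ, quiddity, eta, h0, h1, h1']
  | succ l ih =>
    have hA := hf.entry_add_two (i := i) (j := i + l + 1) (by omega) (by omega)
    have hB := hf.entry_add_two (i := i + 1) (j := i + l + 1) (by omega) (by omega)
    rw [etaProd_succ, ih (by omega), eta, Matrix.mul_fin_two, quiddity]
    ext r s
    fin_cases r <;> fin_cases s <;> simp
    · linear_combination (norm := ring_nf) -hA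
    · ring_nf
    · linear_combination (norm := ring_nf) -hB
    · ring_nf

theorem entry_eq_etaProd (hf : IsTameFrieze n S c) {i j : ℤ} (hij : i + 1 ≤ j)
    (hj : j ≤ i + n + 3) : c (i, j) = etaProd (quiddity c) i (j - i - 1).toNat 0 0 := by
  obtain ⟨⟨-, h1, -⟩, -⟩ := id hf
  rcases hij.eq_or_lt with rfl | hlt
  · simpa using h1 i
  · obtain ⟨l, hl⟩ : ∃ l : ℕ, j = i + l + 2 := ⟨(j - i - 2).toNat, by omega⟩
    rw [show (j - i - 1).toNat = l + 1 by omega, hf.etaProd_quiddity_succ i (by omega), hl]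
    simp

theorem etaProd_height_add_two (hf : IsTameFrieze n S c) (i : ℤ) :
    etaProd (quiddity c) i (n + 2) = !![0, -1; 1, -c (i + 1, i + n + 2)] := by
  obtain ⟨⟨-, -, h2, h3, -⟩, -⟩ := id hf
  rw [hf.etaProd_quiddity_succ i le_rfl]
  push_cast
  rw [show i + (n + 1) + 2 = i + n + 3 by ring, show i + (n + 1) + 1 = i + n + 2 by ring, h3,
    h2, show i + n + 3 = i + 1 + n + 2 by ring, h2]

theorem etaProd_height_add_three (hf : IsTameFrieze n S c) (i : ℤ) :
    etaProd (quiddity c) i (n + 3) = -1 := by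
  have h := congrFun₂
    ((etaProd_succ (quiddity c) i (n + 2)).symm.trans (etaProd_succ' _ i (n + 2))) 1 0
  rw [hf.etaProd_height_add_two, hf.etaProd_height_add_two] at h
  rw [etaProd_succ, hf.etaProd_height_add_two, eta]
  ext r s
  fin_cases r <;> fin_cases s <;> simp
  simpa [eta, Matrix.mul_apply] using h

theorem quiddity_periodic (hf : IsTameFrieze n S c) (i : ℤ) :
    quiddity c (i + (n + 3)) = quiddity c i := by
  have h₁ := hf.etaProd_height_add_three i
  have h₂ := hf.etaProd_height_add_three (i + 1)
  rw [etaProd_succ'] at h₁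
  rw [etaProd_succ, show i + 1 + ((n + 2 : ℕ) : ℤ) = i + (n + 3) by push_cast; ring] at h₂
  apply eta_injective
  calc eta (quiddity c (i + (n + 3)))
      = -(eta (quiddity c i) * etaProd (quiddity c) (i + 1) (n + 2)) *
          eta (quiddity c (i + (n + 3))) := by rw [h₁, neg_neg, one_mul]
    _ = eta (quiddity c i) := by rw [neg_mul, mul_assoc, h₂, mul_neg_one, neg_neg]

theorem etaProd_periodic (hf : IsTameFrieze n S c) (i : ℤ) (l : ℕ) :
    etaProd (quiddity c) (i + (n + 3)) l = etaProd (quiddity c) i l :=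
  etaProd_congr _ _ (fun k => by rw [add_right_comm, hf.quiddity_periodic]) l

end IsTameFrieze

theorem stmt0_general (n : ℕ) (c : ℤ × ℤ → ℂ)
    (hf : IsTameFrieze n Set.univ c) :
    (∀ i j : ℤ, i ≤ j → j ≤ i + (n + 3) →
      c (i, j) = c (i + (n + 3), j + (n + 3))) ∧
    (∀ i : ℤ,
      ((List.range (n + 3)).map (fun k => eta (c (i + k, i + k + 2)))).prod = -1) ∧
    (∀ i j : ℤ, i - 1 ≤ j → j ≤ i + n →
      c (i, j + 2) =
        (((List.range (j - i + 1).toNat).map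
          (fun k => eta (c (i + k, i + k + 2)))).prod) 0 0) := by
  obtain ⟨⟨h0, -⟩, -⟩ := id hf
  simp only [← etaProd_quiddity_eq_list_prod]
  refine ⟨fun i j hij hj => ?_, hf.etaProd_height_add_three, fun i j hij hj => ?_⟩
  · rcases hij.eq_or_lt with rfl | hlt
    · rw [h0, h0]
    · rw [hf.entry_eq_etaProd hlt (by omega), hf.entry_eq_etaProd (by omega) (by omega),
        hf.etaProd_periodic]
      congr 3
      omega
  · rw [hf.entry_eq_etaProd (by omega) (by omega)]
    congr 3
    omega

theorem stmt0 (n : ℕ) (hn : 1 ≤ n) (c : ℤ × ℤ → ℂ)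
    (hf : IsTameFrieze n Set.univ c) :
    (∀ i j : ℤ, i ≤ j → j ≤ i + (n + 3) →
      c (i, j) = c (i + (n + 3), j + (n + 3))) ∧
    (∀ i : ℤ,
      ((List.range (n + 3)).map (fun k => eta (c (i + k, i + k + 2)))).prod = -1) ∧
    (∀ i j : ℤ, i - 1 ≤ j → j ≤ i + n →
      c (i, j + 2) =
        (((List.range (j - i + 1).toNat).map
          (fun k => eta (c (i + k, i + k + 2)))).prod) 0 0) :=
  stmt0_general n c hf
end

section
/- Let m ≥ 4 and let (c₁,…,c_m) ∈ ℂ^m satisfy η(c₁)·η(c₂)⋯η(c_m) = −I₂. Extend the sequence periodically to all k ∈ ℤ by c_{k+m} = c_k. Define a : ℤ × ℤ → ℂ by a(i,i) = 0 and, for j > i, a(i,j) = the (1,1)-entry of the product η(c_i)·η(c_{i+1})⋯η(c_{j−2}) (the empty product for j = i+1 being the identity matrix). Then a is a tame frieze pattern of height m−3 over ℂ which is periodic with period m (i.e. a(i,j) = a(i+m, j+m) for all i ≤ j ≤ i+m). Moreover, if R is a subring of ℂ containing all c_k, then a(i,j) ∈ R for all i ≤ j ≤ i+m. -/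
/-- Inverse of `eta`. -/
noncomputable def etaInv (c : ℂ) : Matrix (Fin 2) (Fin 2) ℂ := !![0, 1; -1, c]

lemma eta_mul_etaInv (x : ℂ) : eta x * etaInv x = 1 := by
  ext i j
  fin_cases i <;> fin_cases j <;>
    simp [eta, etaInv, Matrix.mul_apply, Fin.sum_univ_two, Matrix.one_apply]

lemma etaInv_mul_eta (x : ℂ) : etaInv x * eta x = 1 := by
  ext i j
  fin_cases i <;> fin_cases j <;>
    simp [eta, etaInv, Matrix.mul_apply, Fin.sum_univ_two, Matrix.one_apply]

lemma coe_map_eq (f : ℤ → Matrix (Fin 2) (Fin 2) ℂ) (l : List ℕ) :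
    List.map f (l.flatMap fun a => [((a : ℤ))]) = l.map (fun k : ℕ => f k) := by
  induction l <;> simp_all

lemma det_eta (x : ℂ) : (eta x).det = 1 := by
  simp [eta, Matrix.det_fin_two_of]

/-- The partial product of `eta` matrices. -/
noncomputable def Pm (c : ℤ → ℂ) (i j : ℤ) : Matrix (Fin 2) (Fin 2) ℂ :=
  ((List.range (j - i - 1).toNat).map (fun k : ℕ => eta (c (i + (k : ℤ))))).prod

lemma Pm_one (c : ℤ → ℂ) (i : ℤ) : Pm c i (i + 1) = 1 := by
  unfold Pm
  have h : (i + 1 - i - 1).toNat = 0 := by omega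
  rw [h]
  simp

lemma Pm_succ (c : ℤ → ℂ) {i j : ℤ} (h : i ≤ j) :
    Pm c i (j + 2) = Pm c i (j + 1) * eta (c j) := by
  unfold Pm
  have h1 : (j + 2 - i - 1).toNat = (j + 1 - i - 1).toNat + 1 := by omega
  rw [h1, List.range_succ, List.map_append, List.prod_append, List.map_singleton,
    List.prod_singleton]
  have h2 : i + ((j + 1 - i - 1).toNat : ℤ) = j := by omega
  rw [h2]

lemma Pm_shift (c : ℤ → ℂ) {i j : ℤ} (h : i + 2 ≤ j) :
    Pm c i j = eta (c i) * Pm c (i + 1) j := by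
  unfold Pm
  have h1 : (j - i - 1).toNat = (j - (i + 1) - 1).toNat + 1 := by omega
  rw [h1, List.range_succ_eq_map, List.map_cons, List.prod_cons]
  simp only [Nat.cast_zero, add_zero]
  congr 1
  rw [List.map_map]
  have hf : ((fun k : ℕ => eta (c (i + (k : ℤ)))) ∘ Nat.succ)
      = (fun k : ℕ => eta (c (i + 1 + (k : ℤ)))) := by
    funext k
    simp only [Function.comp_apply]
    congr 1
    push_cast
    ring
  rw [hf]

lemma det_Pm (c : ℤ → ℂ) (i j : ℤ) : (Pm c i j).det = 1 := by
  unfold Pm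
  generalize List.range (j - i - 1).toNat = l
  induction l with
  | nil => simp
  | cons x t ih => simp [Matrix.det_mul, ih, det_eta]

theorem stmt1 (m : ℕ) (hm : 4 ≤ m) (c : ℤ → ℂ)
    (hper : ∀ k : ℤ, c (k + m) = c k)
    (hprod : ((List.range m).map (fun k => eta (c (1 + k)))).prod = -1)
    (a : ℤ × ℤ → ℂ)
    (ha0 : ∀ i : ℤ, a (i, i) = 0)
    (ha : ∀ i j : ℤ, i < j →
      a (i, j) =
        (((List.range (j - i - 1).toNat).map (fun k => eta (c (i + k)))).prod) 0 0) :
    IsTameFrieze (m - 3) Set.univ a ∧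
    (∀ i j : ℤ, i ≤ j → j ≤ i + m → a (i, j) = a (i + m, j + m)) ∧
    (∀ R : Subring ℂ, (∀ k : ℤ, c k ∈ R) →
      ∀ i j : ℤ, i ≤ j → j ≤ i + m → a (i, j) ∈ R) := by
  -- entries of Pm in terms of a
  have ha' : ∀ i j : ℤ, i < j → Pm c i j 0 0 = a (i, j) := by
    intro i j h
    rw [ha i j h]
    unfold Pm
    simp only [List.pure_def, List.bind_eq_flatMap, coe_map_eq]
    rw [← List.map_eq_flatMap, List.map_map]; rfl
  have hone : ∀ i : ℤ, a (i, i + 1) = 1 := by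
    intro i
    rw [← ha' i (i + 1) (by omega), Pm_one]
    simp [Matrix.one_apply]
  have ent01 : ∀ i j : ℤ, i < j → Pm c i j 0 1 = -a (i, j - 1) := by
    intro i j h
    rcases (by omega : j = i + 1 ∨ i + 2 ≤ j) with h' | h'
    · subst h'
      rw [Pm_one]
      simp [Matrix.one_apply, ha0]
    · have e : j = (j - 2) + 2 := by ring
      rw [e, Pm_succ c (by omega : i ≤ j - 2)]
      have e2 : j - 2 + 1 = j - 1 := by ring
      rw [e2]
      simp [Matrix.mul_apply, Fin.sum_univ_two, eta, ha' i (j - 1) (by omega)]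
  have ent10 : ∀ i j : ℤ, i < j → Pm c i j 1 0 = a (i + 1, j) := by
    intro i j h
    rcases (by omega : j = i + 1 ∨ i + 2 ≤ j) with h' | h'
    · subst h'
      rw [Pm_one]
      simp [Matrix.one_apply, ha0]
    · rw [Pm_shift c h']
      simp [Matrix.mul_apply, Fin.sum_univ_two, eta, ha' (i + 1) j (by omega)]
  have ent11 : ∀ i j : ℤ, i + 2 ≤ j → Pm c i j 1 1 = -a (i + 1, j - 1) := by
    intro i j h
    rw [Pm_shift c h]
    simp [Matrix.mul_apply, Fin.sum_univ_two, eta, ent01 (i + 1) j (by omega)]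
  -- the diamond rule
  have diamond : ∀ i j : ℤ, i + 1 ≤ j →
      a (i, j) * a (i + 1, j + 1) - a (i, j + 1) * a (i + 1, j) = 1 := by
    intro i j h
    have hd := det_Pm c i (j + 1)
    rw [Matrix.det_fin_two] at hd
    rw [ha' i (j + 1) (by omega), ent01 i (j + 1) (by omega),
        ent10 i (j + 1) (by omega), ent11 i (j + 1) (by omega)] at hd
    have e : j + 1 - 1 = j := by ring
    rw [e] at hd
    linear_combination hd
  -- the linear recurrence
  have recur : ∀ x j : ℤ, x ≤ j → a (x, j + 2) = c j * a (x, j + 1) - a (x, j) := by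
    intro x j h
    have hs := Pm_succ c h
    have := congrArg (fun M => M 0 0) hs
    simp only [Matrix.mul_apply, Fin.sum_univ_two] at this
    rw [ha' x (j + 2) (by omega), ha' x (j + 1) (by omega),
        ent01 x (j + 1) (by omega)] at this
    have e : j + 1 - 1 = j := by ring
    rw [e] at this
    simp [eta] at this
    rw [this]
    ring
  -- the full-period product is -1
  have step_up : ∀ t : ℤ, Pm c t (t + m + 1) = -1 → Pm c (t + 1) (t + 1 + m + 1) = -1 := by
    intro t ht
    have hs1 : Pm c t (t + m + 1) = eta (c t) * Pm c (t + 1) (t + m + 1) :=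
      Pm_shift c (by omega)
    have hR : Pm c (t + 1) (t + m + 1) = -etaInv (c t) := by
      calc Pm c (t + 1) (t + m + 1)
          = (etaInv (c t) * eta (c t)) * Pm c (t + 1) (t + m + 1) := by
            rw [etaInv_mul_eta, one_mul]
        _ = etaInv (c t) * (eta (c t) * Pm c (t + 1) (t + m + 1)) := by rw [mul_assoc]
        _ = etaInv (c t) * (-1) := by rw [← hs1, ht]
        _ = -etaInv (c t) := by simp
    have hs2 : Pm c (t + 1) (t + m + 2) = Pm c (t + 1) (t + m + 1) * eta (c (t + m)) := by
      have := Pm_succ c (by omega : t + 1 ≤ t + (m : ℤ))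
      convert this using 2 <;> ring
    have e : t + 1 + (m : ℤ) + 1 = t + m + 2 := by ring
    rw [e, hs2, hR, hper t, neg_mul, etaInv_mul_eta]
  have step_down : ∀ t : ℤ, Pm c (t + 1) (t + 1 + m + 1) = -1 → Pm c t (t + m + 1) = -1 := by
    intro t ht
    have hs2 : Pm c (t + 1) (t + m + 2) = Pm c (t + 1) (t + m + 1) * eta (c (t + m)) := by
      have := Pm_succ c (by omega : t + 1 ≤ t + (m : ℤ))
      convert this using 2 <;> ring
    have e : t + 1 + (m : ℤ) + 1 = t + m + 2 := by ring
    rw [e, hs2, hper t] at ht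
    have hR : Pm c (t + 1) (t + m + 1) = -etaInv (c t) := by
      calc Pm c (t + 1) (t + m + 1)
          = (Pm c (t + 1) (t + m + 1) * eta (c t)) * etaInv (c t) := by
            rw [mul_assoc, eta_mul_etaInv, mul_one]
        _ = (-1) * etaInv (c t) := by rw [ht]
        _ = -etaInv (c t) := by simp
    have hs1 : Pm c t (t + m + 1) = eta (c t) * Pm c (t + 1) (t + m + 1) :=
      Pm_shift c (by omega)
    rw [hs1, hR, mul_neg, eta_mul_etaInv]
  have hQ1 : Pm c 1 (1 + m + 1) = -1 := by
    simp only [List.pure_def, List.bind_eq_flatMap, coe_map_eq] at hprod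
    rw [← List.map_eq_flatMap, List.map_map] at hprod
    unfold Pm
    have h1 : ((1 : ℤ) + m + 1 - 1 - 1).toNat = m := by omega
    rw [h1]
    exact hprod
  have hQ : ∀ t : ℤ, Pm c t (t + m + 1) = -1 := by
    intro t
    induction t using Int.induction_on with
    | zero =>
      apply step_down 0
      rw [show (0 : ℤ) + 1 = 1 by ring]
      exact hQ1
    | succ n ih => exact step_up n ih
    | pred n ih =>
      have h := step_down (-(n : ℤ) - 1)
      rw [show (-(n : ℤ) - 1) + 1 = -n by ring] at h
      exact h ih
  -- boundary values
  have hPmTop : ∀ i : ℤ, Pm c i (i + m) = -etaInv (c (i + m - 1)) := by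
    intro i
    have hs := Pm_succ c (by omega : i ≤ i + (m : ℤ) - 1)
    rw [show i + (m : ℤ) - 1 + 2 = i + m + 1 by ring, show i + (m : ℤ) - 1 + 1 = i + m by ring,
        hQ i] at hs
    calc Pm c i (i + m)
        = (Pm c i (i + m) * eta (c (i + m - 1))) * etaInv (c (i + m - 1)) := by
          rw [mul_assoc, eta_mul_etaInv, mul_one]
      _ = (-1) * etaInv (c (i + m - 1)) := by rw [← hs]
      _ = -etaInv (c (i + m - 1)) := by simp
  have hBound0 : ∀ i : ℤ, a (i, i + m) = 0 := by
    intro i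
    rw [← ha' i (i + m) (by omega), hPmTop]
    simp [etaInv]
  have hBound1 : ∀ i : ℤ, a (i, i + m - 1) = 1 := by
    intro i
    have h := ent01 i (i + m) (by omega)
    rw [hPmTop] at h
    simp [etaInv] at h
    linear_combination -h
  -- cast facts
  have hcast : ((m - 3 : ℕ) : ℤ) = (m : ℤ) - 3 := by omega
  refine ⟨⟨⟨ha0, hone, ?_, ?_, fun _ _ _ _ => trivial, fun i j h _ => diamond i j h⟩, ?_⟩, ?_, ?_⟩
  · intro i
    rw [show i + ((m - 3 : ℕ) : ℤ) + 2 = i + m - 1 by omega]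
    exact hBound1 i
  · intro i
    rw [show i + ((m - 3 : ℕ) : ℤ) + 3 = i + m by omega]
    exact hBound0 i
  · -- tame
    intro i j h _
    have h0 := recur i j (by omega)
    have h1 := recur (i + 1) j (by omega)
    have h2 := recur (i + 2) j (by omega)
    rw [Matrix.det_fin_three]
    simp only [Matrix.of_apply, Fin.val_zero, Fin.val_one, Fin.val_two, Nat.cast_zero,
      Nat.cast_one, Nat.cast_ofNat, add_zero]
    rw [h0, h1, h2]
    ring
  · -- periodicity
    intro i j hij _
    rcases eq_or_lt_of_le hij with h | h
    · subst h; rw [ha0, ha0]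
    · rw [← ha' i j h, ← ha' (i + m) (j + m) (by omega)]
      unfold Pm
      have e1 : (j + (m : ℤ) - (i + m) - 1).toNat = (j - i - 1).toNat := by omega
      have hf : (fun k : ℕ => eta (c (i + (m : ℤ) + (k : ℤ))))
          = (fun k : ℕ => eta (c (i + (k : ℤ)))) := by
        funext k
        congr 1
        rw [show i + (m : ℤ) + (k : ℤ) = (i + (k : ℤ)) + m by ring, hper]
      rw [e1, hf]
  · -- subring membership
    intro R hR i j hij _
    have key : ∀ d : ℕ, ∀ x : ℤ, a (x, x + d) ∈ R := by
      intro d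
      induction d using Nat.strong_induction_on with
      | _ d ih =>
        match d with
        | 0 => intro x; simpa using (ha0 x ▸ R.zero_mem : a (x, x) ∈ R)
        | 1 => intro x; rw [Nat.cast_one, hone]; exact R.one_mem
        | (d + 2) =>
          intro x
          have hr := recur x (x + d) (by omega)
          rw [show x + ((d + 2 : ℕ) : ℤ) = x + d + 2 by push_cast; ring, hr]
          refine R.sub_mem (R.mul_mem (hR _) ?_) ?_
          · have := ih (d + 1) (by omega) x
            rwa [show x + ((d + 1 : ℕ) : ℤ) = x + d + 1 by push_cast; ring] at this
          · exact ih d (by omega) x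
    have e : j = i + ((j - i).toNat : ℤ) := by omega
    rw [e]
    exact key _ i
end

section
/- Let (c₁,…,c_m) ∈ ℂ^m be a quiddity cycle. Then η(−c₁)·η(−c₂)⋯η(−c_m) = (−1)^{m+1}·I₂. In particular, if m is even, then (−c₁,…,−c_m) is again a quiddity cycle. -/
/-- A quiddity cycle: a finite sequence `(c₁, …, c_m)`, encoded as a list, with
`η(c₁) ⋯ η(c_m) = -I₂`. -/
def IsQuiddity (l : List ℂ) : Prop := (l.map eta).prod = -1

/-
Conjugation by the involution `D = diag(1, -1)` flips the signs of the off-diagonal entries, so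
`η(-c) = -(D η(c) D)`. In the product the inner factors `D D` cancel and the signs collect into
`(-1)^m`, giving `η(-c₁) ⋯ η(-c_m) = (-1)^m · D (-I₂) D = (-1)^(m+1) · I₂`.
-/

theorem List.prod_map_mul_mul_of_mul_self_eq_one {M : Type*} [Monoid M] {d : M}
    (hd : d * d = 1) (l : List M) :
    (l.map fun x => d * x * d).prod = d * l.prod * d := by
  induction l with
  | nil => simp [hd]
  | cons x l ih =>
    rw [List.map_cons, List.prod_cons, ih, List.prod_cons]
    calc d * x * d * (d * l.prod * d) = d * x * (d * d) * l.prod * d := by noncomm_ring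
      _ = d * (x * l.prod) * d := by rw [hd, mul_one, mul_assoc d x]

theorem neg_one_pow_smul_one {R A : Type*} [CommRing R] [Ring A] [Algebra R A] (n : ℕ) :
    (-1 : R) ^ n • (1 : A) = (-1) ^ n := by
  rw [← Algebra.algebraMap_eq_smul_one, map_pow, map_neg, map_one]

def signDiag : Matrix (Fin 2) (Fin 2) ℂ := !![1, 0; 0, -1]

theorem signDiag_mul_self : signDiag * signDiag = 1 := by
  simp [signDiag, Matrix.one_fin_two]

theorem eta_neg (c : ℂ) : eta (-c) = -(signDiag * eta c * signDiag) := by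
  simp [eta, signDiag]

theorem prod_map_eta_neg (l : List ℂ) :
    (l.map fun c => eta (-c)).prod =
      (-1) ^ l.length * (signDiag * (l.map eta).prod * signDiag) := by
  have hsplit : (l.map fun c => eta (-c)) =
      ((l.map eta).map fun x => signDiag * x * signDiag).map Neg.neg := by
    simp only [List.map_map, Function.comp_def, eta_neg]
  rw [hsplit, List.prod_map_neg, List.length_map, List.length_map,
    List.prod_map_mul_mul_of_mul_self_eq_one signDiag_mul_self]

/-- If `(c₁, …, c_m)` is a quiddity cycle then
`η(-c₁) ⋯ η(-c_m) = (-1)^(m+1) • I₂`; in particular, if `m` is even, then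
`(-c₁, …, -c_m)` is again a quiddity cycle. -/
theorem stmt3 (l : List ℂ) (h : IsQuiddity l) :
    ((l.map (fun c => eta (-c))).prod =
      ((-1 : ℂ) ^ (l.length + 1)) • (1 : Matrix (Fin 2) (Fin 2) ℂ)) ∧
    (Even l.length → IsQuiddity (l.map (fun c => -c))) := by
  have hprod : (l.map fun c => eta (-c)).prod = (-1) ^ (l.length + 1) := by
    rw [prod_map_eta_neg, show (l.map eta).prod = -1 from h, mul_neg_one, neg_mul,
      signDiag_mul_self, pow_succ, mul_neg_one]
  refine ⟨by rw [hprod, neg_one_pow_smul_one], fun heven => ?_⟩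
  rw [IsQuiddity, List.map_map]
  exact hprod.trans (by rw [pow_succ, heven.neg_one_pow, one_mul])
end

section
/- Let R ⊆ ℂ be a subset and let M := inf{ |x| : x ∈ R, x ≠ 0 }; assume M > 0. Let n ≥ 1 and let c : ℤ × ℤ → ℂ be a frieze pattern of height n over R \ {0} (so all entries c(i,j) with i+2 ≤ j ≤ i+n+1 lie in R and are non-zero). Then for every k ∈ ℤ the quiddity entry satisfies |c(k, k+2)| ≤ ((n−1) + 2M) / M². -/
/-!
Fix the entry `c(i+n+1, i+n+3)` and look at the two columns `j = i+n+2` and `j+1` read downwards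
from row `i`: writing `a t = c(i+t, j)` and `b t = c(i+t, j+1)`, we have `a 0 = a (n+1) = 1`,
`b 0 = 0`, `b (n+1) = c(i+n+1, i+n+3)`, and the diamond rule says `a t b (t+1) - b t a (t+1) = 1`.
Hence `b t / a t` increases by `(a t a (t+1))⁻¹` at each step, so the quiddity entry is
`∑ₜ (a t a (t+1))⁻¹`. The two outer terms have one factor equal to `1` and are at most `1/M`, the
`n - 1` inner ones are at most `1/M²`.
-/

open Finset

theorem sum_range_inv_mul_eq_sub_div {K : Type*} [Field K] {a b : ℕ → K} {N : ℕ}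
    (ha : ∀ t ≤ N, a t ≠ 0) (hab : ∀ t < N, a t * b (t + 1) - b t * a (t + 1) = 1) :
    ∑ t ∈ range N, (a t * a (t + 1))⁻¹ = b N / a N - b 0 / a 0 := by
  rw [← sum_range_sub (fun t => b t / a t)]
  refine sum_congr rfl fun t ht => ?_
  have ht : t < N := mem_range.mp ht
  have hat := ha t ht.le
  have hat1 := ha (t + 1) ht
  field_simp
  linear_combination -hab t ht

theorem norm_sum_range_inv_mul_le {𝕜 : Type*} [NormedField 𝕜] {a : ℕ → 𝕜} {M : ℝ} {n : ℕ}
    (hM : 0 < M) (hn : 1 ≤ n) (h0 : a 0 = 1) (hlast : a (n + 1) = 1)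
    (ha : ∀ t, 1 ≤ t → t ≤ n → M ≤ ‖a t‖) :
    ‖∑ t ∈ range (n + 1), (a t * a (t + 1))⁻¹‖ ≤ ((n : ℝ) - 1 + 2 * M) / M ^ 2 := by
  obtain ⟨m, rfl⟩ : ∃ m, n = m + 1 := ⟨n - 1, by omega⟩
  have hinv : ∀ t, 1 ≤ t → t ≤ m + 1 → ‖(a t)⁻¹‖ ≤ M⁻¹ := fun t ht₁ ht₂ => by
    rw [norm_inv]
    exact inv_anti₀ hM (ha t ht₁ ht₂)
  have hfirst : ‖(a 0 * a 1)⁻¹‖ ≤ M⁻¹ := by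
    simpa only [h0, one_mul] using hinv 1 le_rfl (by omega)
  have hlast' : ‖(a (m + 1) * a (m + 2))⁻¹‖ ≤ M⁻¹ := by
    simpa only [hlast, mul_one] using hinv (m + 1) (by omega) le_rfl
  have hinner : ∀ t ∈ range m, ‖(a (t + 1) * a (t + 1 + 1))⁻¹‖ ≤ M⁻¹ * M⁻¹ := fun t ht => by
    have ht : t < m := mem_range.mp ht
    rw [mul_inv, norm_mul]
    exact mul_le_mul (hinv _ (by omega) (by omega)) (hinv _ (by omega) (by omega))
      (norm_nonneg _) (inv_nonneg.mpr hM.le)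
  rw [sum_range_succ, sum_range_succ']
  calc _ ≤ ‖∑ t ∈ range m, (a (t + 1) * a (t + 1 + 1))⁻¹‖ + ‖(a 0 * a 1)⁻¹‖
          + ‖(a (m + 1) * a (m + 2))⁻¹‖ := norm_add₃_le
    _ ≤ m * (M⁻¹ * M⁻¹) + M⁻¹ + M⁻¹ := by
        gcongr
        simpa using norm_sum_le_of_le _ hinner
    _ = ((m + 1 : ℕ) - 1 + 2 * M) / M ^ 2 := by
        field_simp
        push_cast
        ring

def column (c : ℤ × ℤ → ℂ) (i j : ℤ) (t : ℕ) : ℂ := c (i + t, j)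

namespace IsFrieze

variable {n : ℕ} {S : Set ℂ} {c : ℤ × ℤ → ℂ}

theorem column_zero (hf : IsFrieze n S c) (i : ℤ) : column c i (i + n + 2) 0 = 1 := by
  simpa [column] using hf.2.2.1 i

theorem column_last (hf : IsFrieze n S c) (i : ℤ) : column c i (i + n + 2) (n + 1) = 1 := by
  simpa [column, add_assoc, add_left_comm] using hf.2.1 (i + n + 1)

theorem column_mem (hf : IsFrieze n S c) (i : ℤ) {t : ℕ} (ht₁ : 1 ≤ t) (ht₂ : t ≤ n) :
    column c i (i + n + 2) t ∈ S :=
  hf.2.2.2.2.1 _ _ (by omega) (by omega)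

theorem column_ne_zero (hf : IsFrieze n S c) (hS : 0 ∉ S) (i : ℤ) {t : ℕ} (ht : t ≤ n + 1) :
    column c i (i + n + 2) t ≠ 0 := by
  rcases Nat.eq_zero_or_pos t with rfl | ht₁
  · simp [hf.column_zero]
  rcases ht.eq_or_lt with rfl | ht₂
  · simp [hf.column_last]
  exact fun h => hS (h ▸ hf.column_mem i ht₁ (by omega))

theorem column_diamond (hf : IsFrieze n S c) (i : ℤ) {t : ℕ} (ht : t ≤ n) :
    column c i (i + n + 2) t * column c i (i + n + 3) (t + 1)
      - column c i (i + n + 3) t * column c i (i + n + 2) (t + 1) = 1 := by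
  have h := hf.2.2.2.2.2 (i + t) (i + n + 2) (by omega) (by omega)
  simp only [column]
  convert h using 4 <;> push_cast <;> ring_nf

theorem quiddity_eq_sum (hf : IsFrieze n S c) (hS : 0 ∉ S) (i : ℤ) :
    c (i + n + 1, i + n + 3) =
      ∑ t ∈ range (n + 1), (column c i (i + n + 2) t * column c i (i + n + 2) (t + 1))⁻¹ := by
  rw [sum_range_inv_mul_eq_sub_div (b := column c i (i + n + 3))
    (fun t ht => hf.column_ne_zero hS i ht) (fun t ht => hf.column_diamond i (by omega)),
    hf.column_zero, hf.column_last,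
    show column c i (i + n + 3) 0 = 0 by simpa [column] using hf.2.2.2.1 i]
  simp [column, add_assoc]

end IsFrieze

/-- If `M := inf { |x| : x ∈ R, x ≠ 0 } > 0` and `c` is a frieze pattern of height `n` over
`R \ {0}`, then each quiddity entry satisfies `|c(k, k+2)| ≤ ((n − 1) + 2M) / M²`. -/
theorem stmt6 (R : Set ℂ) (M : ℝ)
    (hM : M = sInf {r : ℝ | ∃ x ∈ R, x ≠ 0 ∧ r = ‖x‖})
    (hMpos : 0 < M)
    (n : ℕ) (hn : 1 ≤ n) (c : ℤ × ℤ → ℂ)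
    (hf : IsFrieze n (R \ {0}) c) :
    ∀ k : ℤ, ‖c (k, k + 2)‖ ≤ (((n : ℝ) - 1) + 2 * M) / M ^ 2 := by
  have hR : ∀ x ∈ R \ {0}, M ≤ ‖x‖ := fun x hx => by
    rw [hM]
    refine csInf_le ⟨0, ?_⟩ ⟨x, hx.1, hx.2, rfl⟩
    rintro r ⟨y, -, -, rfl⟩
    exact norm_nonneg y
  intro k
  obtain ⟨i, rfl⟩ : ∃ i : ℤ, k = i + n + 1 := ⟨k - n - 1, by ring⟩
  rw [show i + n + 1 + 2 = i + n + 3 by ring, hf.quiddity_eq_sum (by simp) i]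
  exact norm_sum_range_inv_mul_le hMpos hn (hf.column_zero i) (hf.column_last i)
    fun t ht₁ ht₂ => hR _ (hf.column_mem i ht₁ ht₂)
end

section
/- Let R ⊆ ℂ be a discrete subset, i.e. R has no accumulation point in ℂ. Then for each n ≥ 1 there are only finitely many frieze patterns of height n over R \ {0}; precisely, the set of restrictions to the band B_n = {(i,j) ∈ ℤ² : i ≤ j ≤ i+n+3} of frieze patterns of height n over R \ {0} is a finite set. -/
namespace Stmt7Aux

noncomputable section

/-- 2×2 determinant of a pair of vectors in `ℂ²`. -/
def Dt (u v : ℂ × ℂ) : ℂ := u.1 * v.2 - u.2 * v.1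

lemma Dt_self (u : ℂ × ℂ) : Dt u u = 0 := by simp [Dt]; ring

lemma Dt_swap (u v : ℂ × ℂ) : Dt v u = -Dt u v := by simp [Dt]; ring

lemma Dt_smul_smul (x y : ℂ) (u v : ℂ × ℂ) :
    Dt (x • u) (y • v) = (x * y) * Dt u v := by
  simp [Dt, Prod.smul_fst, Prod.smul_snd, smul_eq_mul]; ring

lemma Dt_smul_left (x : ℂ) (u v : ℂ × ℂ) : Dt (x • u) v = x * Dt u v := by
  simp [Dt, Prod.smul_fst, Prod.smul_snd, smul_eq_mul]; ring

lemma Dt_smul_right (y : ℂ) (u v : ℂ × ℂ) : Dt u (y • v) = y * Dt u v := by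
  simp [Dt, Prod.smul_fst, Prod.smul_snd, smul_eq_mul]; ring

/-- Cramer-type identity in `ℂ²`. -/
lemma cramer (u v z : ℂ × ℂ) :
    (Dt u v) • z = (Dt z v) • u + (Dt u z) • v := by
  ext <;> simp [Dt, Prod.smul_fst, Prod.smul_snd, smul_eq_mul] <;> ring

lemma Dt_comb_left (a b : ℂ) (u v z : ℂ × ℂ) :
    Dt (a • u + b • v) z = a * Dt u z + b * Dt v z := by
  simp [Dt, Prod.smul_fst, Prod.smul_snd, smul_eq_mul, Prod.fst_add, Prod.snd_add]; ring

/-- Key expansion lemma: in a cyclically closed (up to scalar) sequence of vectors with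
nonzero consecutive determinants, some "second diagonal" determinant is small. -/
lemma lemA (m : ℕ) (hm : 1 ≤ m) (w : ℤ → ℂ × ℂ) (σ : ℂ)
    (hper : ∀ k : ℤ, w (k + m) = σ • w k)
    (he : ∀ k : ℤ, Dt (w k) (w (k + 1)) ≠ 0)
    (hbig : ∀ k : ℤ, ‖Dt (w (k - 1)) (w k)‖ + ‖Dt (w k) (w (k + 1))‖
        < ‖Dt (w (k - 1)) (w (k + 1))‖) : False := by
  set x : ℤ → ℂ := fun k => Dt (w k) (w 0) with hx
  have key : ∀ k : ℕ, ‖x k‖ < ‖x (k + 1)‖ := by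
    intro k
    induction k with
    | zero =>
      have h0 : x 0 = 0 := Dt_self _
      have h1 : x 1 ≠ 0 := by
        have h := he 0
        rw [zero_add] at h
        have hs : Dt (w 1) (w 0) = -Dt (w 0) (w 1) := Dt_swap _ _
        simp only [hx, hs]
        simpa using h
      have hc : ((0:ℕ):ℤ) = (0:ℤ) := by norm_num
      rw [hc, zero_add, h0]
      simpa using norm_pos_iff.mpr h1
    | succ k ih =>
      -- recursion: e_k * x_{k+2} = -e_{k+1} * x_k + D2 * x_{k+1}
      have hrec : Dt (w k) (w ((k:ℤ) + 1)) * x ((k:ℤ) + 2)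
          = Dt (w ((k:ℤ) + 2)) (w ((k:ℤ) + 1)) * x (k:ℤ)
            + Dt (w (k:ℤ)) (w ((k:ℤ) + 2)) * x ((k:ℤ) + 1) := by
        have hcr := cramer (w (k:ℤ)) (w ((k : ℤ) + 1)) (w ((k : ℤ) + 2))
        have h2 := congrArg (fun z => Dt z (w 0)) hcr
        simp only [Dt_smul_left, Dt_comb_left] at h2
        simpa only [hx] using h2
      set e0 := Dt (w (k:ℤ)) (w ((k:ℤ) + 1)) with he0
      set e1 := Dt (w ((k:ℤ)+1)) (w ((k:ℤ) + 2)) with he1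
      set d2 := Dt (w (k:ℤ)) (w ((k:ℤ) + 2)) with hd2
      have hb : ‖e0‖ + ‖e1‖ < ‖d2‖ := by
        have h := hbig ((k:ℤ) + 1)
        rw [show (k:ℤ) + 1 - 1 = (k:ℤ) by ring, show (k:ℤ) + 1 + 1 = (k:ℤ) + 2 by ring] at h
        exact h
      have hA0 : 0 < ‖e0‖ := norm_pos_iff.mpr (he k)
      have hA1 : 0 < ‖e1‖ := by
        have h := he ((k:ℤ)+1)
        rw [show (k:ℤ) + 1 + 1 = (k:ℤ) + 2 by ring] at h
        exact norm_pos_iff.mpr h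
      have hswap : Dt (w ((k:ℤ) + 2)) (w ((k:ℤ) + 1)) = -e1 := Dt_swap _ _
      rw [hswap] at hrec
      have hxk : ‖x ((k:ℤ))‖ < ‖x ((k:ℤ) + 1)‖ := by
        have h := ih; push_cast at h ⊢; exact h
      have hxk1pos : 0 < ‖x ((k:ℤ) + 1)‖ :=
        lt_of_le_of_lt (norm_nonneg _) hxk
      have hsum : d2 * x ((k:ℤ)+1) = e0 * x ((k:ℤ)+2) + e1 * x (k:ℤ) := by
        linear_combination -hrec
      have htri : ‖d2‖ * ‖x ((k:ℤ)+1)‖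
          ≤ ‖e0‖ * ‖x ((k:ℤ)+2)‖ + ‖e1‖ * ‖x (k:ℤ)‖ := by
        rw [← norm_mul, ← norm_mul, ← norm_mul, hsum]
        exact norm_add_le _ _
      have hmul : ‖e0‖ * ‖x ((k:ℤ)+1)‖
          < ‖e0‖ * ‖x ((k:ℤ)+2)‖ := by
        nlinarith [hxk, hxk1pos, hA1, htri, hb]
      have hfin := lt_of_mul_lt_mul_left hmul (norm_nonneg e0)
      push_cast
      convert hfin using 3
      · rfl
      · push_cast; ring
  have hmono : StrictMono fun k : ℕ => ‖x k‖ := strictMono_nat_of_lt_succ key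
  have hxm : x m = 0 := by
    have : w (m : ℤ) = σ • w 0 := by simpa using hper 0
    simp only [hx, this, Dt_smul_left, Dt_self _, mul_zero]
  have h01 : ‖x 0‖ < ‖x m‖ := hmono (by omega : 0 < m)
  have hx0 : x 0 = 0 := Dt_self _
  rw [hx0, hxm] at h01
  simp at h01

/-! ### Integer division helpers -/

lemma ediv_succ_dvd {M k : ℤ} (hM : 0 < M) (h : M ∣ (k + 1)) :
    (k + 1) / M = k / M + 1 ∧ k % M = M - 1 := by
  have hk := Int.mul_ediv_add_emod k M
  have h0 : 0 ≤ k % M := Int.emod_nonneg k (by omega)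
  have h1 : k % M < M := Int.emod_lt_of_pos k hM
  obtain ⟨t, ht⟩ := h
  have hs : k % M + 1 = M * (t - k / M) := by linear_combination ht + hk
  have hdvd : M ∣ (k % M + 1) := ⟨t - k / M, hs⟩
  have hle : M ≤ k % M + 1 := Int.le_of_dvd (by omega) hdvd
  have hsM : k % M = M - 1 := by omega
  have : (k + 1) / M = k / M + 1 ∧ (k + 1) % M = 0 := by
    rw [Int.ediv_emod_unique hM]
    refine ⟨by linear_combination hk - hsM, le_refl _, hM⟩
  exact ⟨this.1, hsM⟩

lemma ediv_succ_not_dvd {M k : ℤ} (hM : 0 < M) (h : ¬ M ∣ (k + 1)) :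
    (k + 1) / M = k / M ∧ (k + 1) % M = k % M + 1 := by
  have hk := Int.mul_ediv_add_emod k M
  have h0 : 0 ≤ k % M := Int.emod_nonneg k (by omega)
  have h1 : k % M < M := Int.emod_lt_of_pos k hM
  have hne : k % M ≠ M - 1 := by
    intro hEq
    exact h ⟨k / M + 1, by linear_combination -hk + hEq⟩
  have : (k + 1) / M = k / M ∧ (k + 1) % M = k % M + 1 := by
    rw [Int.ediv_emod_unique hM]
    exact ⟨by linear_combination hk, by omega, by omega⟩
  exact this

lemma not_dvd_of_bounds {M d : ℤ} (h1 : 0 < d) (h2 : d < M) : ¬ M ∣ d := by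
  intro h
  have := Int.le_of_dvd h1 h
  omega

lemma emod_add_ediv' (k M : ℤ) : k = k % M + (k / M) * M := by
  have := Int.mul_ediv_add_emod k M
  linarith

/-! ### Polygons -/

/-- A twisted closed `m`-gon in `ℂ²` with edge invariants in `E` and
non-adjacent determinants in `Rs`. -/
def IsPoly (m : ℕ) (E Rs : Set ℂ) (w : ℤ → ℂ × ℂ) : Prop :=
  (∃ σ : ℂ, (σ = 1 ∨ σ = -1) ∧ ∀ k : ℤ, w (k + m) = σ • w k) ∧
  (∀ k : ℤ, Dt (w k) (w (k + 1)) ∈ E) ∧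
  (∀ k l : ℤ, ¬((m : ℤ) ∣ (l - k)) → ¬((m : ℤ) ∣ (l - k - 1)) → ¬((m : ℤ) ∣ (l - k + 1)) →
    Dt (w k) (w l) ∈ Rs)

/-- The set of determinant data of such polygons. -/
def PolyD (m : ℕ) (E Rs : Set ℂ) : Set (ℤ × ℤ → ℂ) :=
  {D | ∃ w, IsPoly m E Rs w ∧ D = fun p => Dt (w p.1) (w p.2)}

section PolyPer

variable {m : ℕ} {σ : ℂ} {w : ℤ → ℂ × ℂ}

lemma sigma_ne_zero (hσ : σ = 1 ∨ σ = -1) : σ ≠ 0 := by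
  rcases hσ with h | h <;> rw [h] <;> norm_num

lemma sigma_sq (hσ : σ = 1 ∨ σ = -1) : σ * σ = 1 := by
  rcases hσ with h | h <;> rw [h] <;> norm_num

lemma wper_t (hσ : σ = 1 ∨ σ = -1) (hper : ∀ k : ℤ, w (k + m) = σ • w k) :
    ∀ (t : ℤ) (k : ℤ), w (k + t * m) = σ ^ t • w k := by
  have hσ0 : σ ≠ 0 := sigma_ne_zero hσ
  intro t
  induction t using Int.induction_on with
  | zero => intro k; simp
  | succ i ih =>
    intro k
    have h1 : k + ((i : ℤ) + 1) * m = (k + i * m) + m := by ring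
    rw [h1, hper, ih, smul_smul, ← zpow_one_add₀ hσ0, add_comm 1 (i : ℤ)]
  | pred i ih =>
    intro k
    have h1 : k + (-(i : ℤ) - 1) * m + m = k + (-(i : ℤ)) * m := by ring
    have h2 : σ • w (k + (-(i : ℤ) - 1) * m) = σ ^ (-(i : ℤ)) • w k := by
      rw [← hper, h1, ih]
    have h3 := congrArg (fun z => σ⁻¹ • z) h2
    simp only [inv_smul_smul₀ hσ0, smul_smul] at h3
    rw [h3]
    congr 1
    rw [zpow_sub_one₀ hσ0, mul_comm]

lemma wred (hσ : σ = 1 ∨ σ = -1) (hper : ∀ k : ℤ, w (k + m) = σ • w k) (k : ℤ) :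
    w k = σ ^ (k / (m : ℤ)) • w (k % (m : ℤ)) := by
  have h1 : k = k % (m : ℤ) + (k / (m : ℤ)) * m := emod_add_ediv' k m
  conv_lhs => rw [h1]
  rw [wper_t hσ hper]

end PolyPer

/-! ### Base case m = 3 -/

def tab3 (σ e0 e1 e2 : ℂ) (a b : ℤ) : ℂ :=
  if a = b then 0
  else if a = 0 ∧ b = 1 then e0
  else if a = 1 ∧ b = 2 then e1
  else if a = 0 ∧ b = 2 then -(σ * e2)
  else if a = 1 ∧ b = 0 then -e0
  else if a = 2 ∧ b = 1 then -e1
  else σ * e2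

def rec3 (σ e0 e1 e2 : ℂ) : ℤ × ℤ → ℂ :=
  fun p => σ ^ (p.1 / 3 + p.2 / 3) * tab3 σ e0 e1 e2 (p.1 % 3) (p.2 % 3)

lemma polyD3 (E Rs : Set ℂ) (hE : E.Finite) : (PolyD 3 E Rs).Finite := by
  have hT : (({1, -1} : Set ℂ) ×ˢ (E ×ˢ (E ×ˢ E))).Finite :=
    ((Set.finite_singleton (-1 : ℂ)).insert 1).prod (hE.prod (hE.prod hE))
  apply Set.Finite.subset (hT.biUnion (fun t _ => Set.finite_singleton
    (rec3 t.1 t.2.1 t.2.2.1 t.2.2.2)))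
  rintro D ⟨w, ⟨⟨σ, hσ, hper0⟩, hP2, hP3⟩, rfl⟩
  have hσ0 : σ ≠ 0 := sigma_ne_zero hσ
  have hσσ : σ * σ = 1 := sigma_sq hσ
  set e0 := Dt (w 0) (w 1) with he0
  set e1 := Dt (w 1) (w 2) with he1
  set e2 := Dt (w 2) (w 3) with he2
  have hm0 : e0 ∈ E := by have := hP2 0; rwa [zero_add] at this
  have hm1 : e1 ∈ E := by have := hP2 1; rwa [show (1:ℤ)+1 = 2 by norm_num] at this
  have hm2 : e2 ∈ E := by have := hP2 2; rwa [show (2:ℤ)+1 = 3 by norm_num] at this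
  have hmem : (σ, e0, e1, e2) ∈ (({1, -1} : Set ℂ) ×ˢ (E ×ˢ (E ×ˢ E))) :=
    ⟨by rcases hσ with h | h <;> simp [h], hm0, hm1, hm2⟩
  apply Set.mem_biUnion hmem
  simp only [Set.mem_singleton_iff]
  have h3 : w (3:ℤ) = σ • w 0 := by
    have := hper0 0
    rw [zero_add] at this
    norm_num at this
    exact this
  have h02 : Dt (w 0) (w 2) = -(σ * e2) := by
    have hh : e2 = σ * Dt (w 2) (w 0) := by
      rw [he2, h3, Dt_smul_right]
    rw [Dt_swap (w 0) (w 2)] at hh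
    linear_combination σ * hh - Dt (w 0) (w 2) * hσσ
  have htab : ∀ a b : ℤ, 0 ≤ a → a < 3 → 0 ≤ b → b < 3 →
      Dt (w a) (w b) = tab3 σ e0 e1 e2 a b := by
    intro a b ha0 ha3 hb0 hb3
    have ha : a = 0 ∨ a = 1 ∨ a = 2 := by omega
    have hb : b = 0 ∨ b = 1 ∨ b = 2 := by omega
    rcases ha with rfl | rfl | rfl <;> rcases hb with rfl | rfl | rfl
    · norm_num [tab3]; exact Dt_self _
    · norm_num [tab3]; rfl
    · norm_num [tab3]; exact h02
    · norm_num [tab3]; rw [Dt_swap, ← he0]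
    · norm_num [tab3]; exact Dt_self _
    · norm_num [tab3]; rfl
    · norm_num [tab3]; rw [Dt_swap, h02]; ring
    · norm_num [tab3]; rw [Dt_swap, ← he1]
    · norm_num [tab3]; exact Dt_self _
  funext p
  obtain ⟨k, l⟩ := p
  have hred : Dt (w k) (w l)
      = σ ^ (k / (3:ℤ) + l / (3:ℤ)) * Dt (w (k % (3:ℤ))) (w (l % (3:ℤ))) := by
    have := wred (m := 3) hσ hper0
    norm_num at this
    rw [this k, this l, Dt_smul_smul, ← zpow_add₀ hσ0]
  show Dt (w k) (w l) = rec3 σ e0 e1 e2 (k, l)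
  simp only [rec3]
  rw [hred]
  congr 1
  exact htab _ _ (Int.emod_nonneg k (by norm_num)) (Int.emod_lt_of_pos k (by norm_num))
    (Int.emod_nonneg l (by norm_num)) (Int.emod_lt_of_pos l (by norm_num))

/-! ### Vertex deletion machinery -/

lemma Dt_comb_right (a b : ℂ) (u v z : ℂ × ℂ) :
    Dt z (a • u + b • v) = a * Dt z u + b * Dt z v := by
  simp [Dt, Prod.smul_fst, Prod.smul_snd, smul_eq_mul, Prod.fst_add, Prod.snd_add]; ring

def psiF (m : ℕ) (k : ℤ) : ℤ := k + k / (m : ℤ)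

def chiF (M : ℤ) (u : ℤ) : ℤ := u - u / M

lemma psiF_shift (m : ℕ) (hm : 0 < m) (t k : ℤ) :
    psiF m (k + t * m) = psiF m k + t * ((m : ℤ) + 1) := by
  simp only [psiF]
  rw [Int.add_mul_ediv_right k t (by omega : (m:ℤ) ≠ 0)]
  ring

lemma psiF_diff (m : ℕ) (hm : 0 < m) (k r : ℤ) (h0 : 0 ≤ r) (h1 : r < m) :
    r ≤ psiF m (k + r) - psiF m k ∧ psiF m (k + r) - psiF m k ≤ r + 1 := by
  have hm' : (0:ℤ) < m := by exact_mod_cast hm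
  have hlo : k / (m:ℤ) ≤ (k + r) / m := Int.ediv_le_ediv hm' (by omega)
  have hhi : (k + r) / (m:ℤ) ≤ k / m + 1 := by
    have h2 : (k + r) / (m:ℤ) ≤ (k + 1 * m) / m := Int.ediv_le_ediv hm' (by omega)
    rwa [Int.add_mul_ediv_right k 1 (by omega : (m:ℤ) ≠ 0)] at h2
  simp only [psiF]
  omega

lemma psiF_succ_nodvd (m : ℕ) (hm : 0 < m) (k : ℤ) (h : ¬ (m:ℤ) ∣ (k + 1)) :
    psiF m (k + 1) = psiF m k + 1 := by
  have hm' : (0:ℤ) < m := by exact_mod_cast hm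
  simp only [psiF]
  rw [(ediv_succ_not_dvd hm' h).1]
  ring

lemma psiF_succ_dvd (m : ℕ) (hm : 0 < m) (k : ℤ) (h : (m:ℤ) ∣ (k + 1)) :
    psiF m (k + 1) = psiF m k + 2 ∧
      psiF m k = ((k + 1) / (m:ℤ)) * ((m:ℤ) + 1) - 2 := by
  have hm' : (0:ℤ) < m := by exact_mod_cast hm
  obtain ⟨hdiv, hmod⟩ := ediv_succ_dvd hm' h
  have hexact : ((k + 1) / (m:ℤ)) * m = k + 1 := Int.ediv_mul_cancel h
  constructor
  · simp only [psiF]; omega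
  · simp only [psiF]
    have : k / (m:ℤ) = (k+1)/(m:ℤ) - 1 := by omega
    rw [this]
    linear_combination -hexact

lemma psi_chi (m : ℕ) (hm : 0 < m) (u : ℤ) (h : ¬ ((m:ℤ) + 1) ∣ (u + 1)) :
    psiF m (chiF ((m:ℤ) + 1) u) = u := by
  have hm' : (0:ℤ) < m := by exact_mod_cast hm
  set M : ℤ := (m:ℤ) + 1 with hMdef
  set q : ℤ := u / M with hqdef
  set s : ℤ := u % M with hsdef
  have hq : M * q + s = u := Int.mul_ediv_add_emod u M
  have hs0 : 0 ≤ s := Int.emod_nonneg u (by omega)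
  have hs1 : s < M := Int.emod_lt_of_pos u (by omega)
  have hsm : s ≠ (m:ℤ) := by
    intro hEq
    exact h ⟨q + 1, by linear_combination -hq + hEq - hMdef⟩
  have hchi : chiF M u = s + q * (m:ℤ) := by
    simp only [chiF, ← hqdef]
    linear_combination -hq
  rw [hchi]
  simp only [psiF]
  rw [Int.add_mul_ediv_right s q (by omega : (m:ℤ) ≠ 0),
    Int.ediv_eq_zero_of_lt hs0 (by omega)]
  linear_combination hq

def recF (m : ℕ) (i : ℤ) (σ lam e1 e2 : ℂ) (D' : ℤ × ℤ → ℂ) : ℤ × ℤ → ℂ :=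
  fun p =>
    if ((m : ℤ) + 1) ∣ (p.1 - i) then
      (if ((m : ℤ) + 1) ∣ (p.2 - i) then 0
       else σ ^ ((p.1 - i) / ((m : ℤ) + 1)) *
         ((e2 * D' (chiF ((m : ℤ) + 1) (i - 1 - i - 1), chiF ((m : ℤ) + 1) (p.2 - i - 1))
           + e1 * D' (chiF ((m : ℤ) + 1) (i + 1 - i - 1), chiF ((m : ℤ) + 1) (p.2 - i - 1))) / lam))
    else if ((m : ℤ) + 1) ∣ (p.2 - i) then
      σ ^ ((p.2 - i) / ((m : ℤ) + 1)) *
        ((e2 * D' (chiF ((m : ℤ) + 1) (p.1 - i - 1), chiF ((m : ℤ) + 1) (i - 1 - i - 1))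
          + e1 * D' (chiF ((m : ℤ) + 1) (p.1 - i - 1), chiF ((m : ℤ) + 1) (i + 1 - i - 1))) / lam)
    else D' (chiF ((m : ℤ) + 1) (p.1 - i - 1), chiF ((m : ℤ) + 1) (p.2 - i - 1))

theorem polyD_finite (Rs : Set ℂ) (hRs : ∀ r : ℝ, (Rs ∩ Metric.closedBall 0 r).Finite)
    (h0R : (0:ℂ) ∉ Rs) :
    ∀ m : ℕ, 3 ≤ m → ∀ E : Set ℂ, E.Finite → (0:ℂ) ∉ E → (PolyD m E Rs).Finite := by
  intro m hm
  induction m, hm using Nat.le_induction with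
  | base => intro E hE _; exact polyD3 E Rs hE
  | succ m hm IH =>
    intro E hE h0E
    obtain ⟨CE, hCE⟩ : ∃ C : ℝ, ∀ x ∈ E, ‖x‖ ≤ C := by
      obtain ⟨C, hC⟩ := (hE.image (fun x : ℂ => ‖x‖)).bddAbove
      exact ⟨C, fun x hx => hC (Set.mem_image_of_mem _ hx)⟩
    set F : Set ℂ := Rs ∩ Metric.closedBall 0 (2 * CE) with hFdef
    have hFfin : F.Finite := hRs _
    have hE' : (E ∪ F).Finite := hE.union hFfin
    have h0E' : (0:ℂ) ∉ E ∪ F := by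
      rintro (h | h)
      · exact h0E h
      · exact h0R h.1
    set M : ℤ := (m : ℤ) + 1 with hMdef
    have hMc : ((m + 1 : ℕ) : ℤ) = M := by push_cast; ring
    have hm4 : (4:ℤ) ≤ M := by omega
    set T : Set (ℕ × ℂ × ℂ × ℂ × ℂ) :=
      (Set.Iio (m + 1)) ×ˢ (({1, -1} : Set ℂ) ×ˢ (F ×ˢ (E ×ˢ E))) with hTdef
    have hTfin : T.Finite :=
      (Set.finite_Iio _).prod (((Set.finite_singleton (-1 : ℂ)).insert 1).prod
        (hFfin.prod (hE.prod hE)))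
    apply Set.Finite.subset (hTfin.biUnion (fun t _ =>
      ((IH (E ∪ F) hE' h0E').image
        (fun D' => recF m (t.1 : ℤ) t.2.1 t.2.2.1 t.2.2.2.1 t.2.2.2.2 D'))))
    rintro D ⟨w, ⟨⟨σ, hσ, hper⟩, hP2, hP3⟩, rfl⟩
    have hσ0 : σ ≠ 0 := sigma_ne_zero hσ
    have hσσ : σ * σ = 1 := sigma_sq hσ
    have hσpow : ∀ t : ℤ, σ ^ t = 1 ∨ σ ^ t = -1 := by
      intro t
      rcases hσ with h | h
      · left; rw [h, one_zpow]
      · rcases Int.even_or_odd t with he | ho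
        · left; rw [h]; exact he.neg_one_zpow
        · right; rw [h]; exact ho.neg_one_zpow
    have wsh : ∀ (t k : ℤ), w (k + t * M) = σ ^ t • w k := by
      intro t k
      rw [← hMc]
      exact wper_t hσ hper t k
    have he : ∀ k : ℤ, Dt (w k) (w (k + 1)) ≠ 0 := fun k h => h0E (h ▸ hP2 k)
    have hCE0 : (0:ℝ) < CE :=
      lt_of_lt_of_le (norm_pos_iff.mpr (he 0)) (hCE _ (hP2 0))
    -- find a small second diagonal
    have hex : ∃ k : ℤ, ‖Dt (w (k - 1)) (w (k + 1))‖
        ≤ ‖Dt (w (k - 1)) (w k)‖ + ‖Dt (w k) (w (k + 1))‖ := by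
      by_contra hno
      push_neg at hno
      exact lemA (m + 1) (by omega) w σ hper he hno
    obtain ⟨i₀, hi₀⟩ := hex
    have hsmall0 : ‖Dt (w (i₀ - 1)) (w (i₀ + 1))‖ ≤ 2 * CE := by
      have h1 : Dt (w (i₀ - 1)) (w i₀) ∈ E := by
        have := hP2 (i₀ - 1)
        rwa [show i₀ - 1 + 1 = i₀ by ring] at this
      have h2 := hP2 i₀
      have := add_le_add (hCE _ h1) (hCE _ h2)
      calc ‖Dt (w (i₀ - 1)) (w (i₀ + 1))‖
          ≤ _ := hi₀
        _ ≤ CE + CE := this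
        _ = 2 * CE := by ring
    set i : ℤ := i₀ % M with hidef
    have hib : 0 ≤ i ∧ i < M :=
      ⟨Int.emod_nonneg i₀ (by omega), Int.emod_lt_of_pos i₀ (by omega)⟩
    set lam : ℂ := Dt (w (i - 1)) (w (i + 1)) with hlamdef
    have habs_smul : ∀ (t : ℤ) (z : ℂ), ‖σ ^ t * z‖ = ‖z‖ := by
      intro t z
      rcases hσpow t with h | h <;> rw [h] <;> simp
    have hlam_eq : ‖lam‖ = ‖Dt (w (i₀ - 1)) (w (i₀ + 1))‖ := by
      have hi₀i : i₀ = i + (i₀ / M) * M := emod_add_ediv' i₀ M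
      have h1 : i₀ - 1 = (i - 1) + (i₀ / M) * M := by omega
      have h2 : i₀ + 1 = (i + 1) + (i₀ / M) * M := by omega
      rw [hlamdef, h1, h2, wsh, wsh, Dt_smul_smul]
      rw [← zpow_add₀ hσ0]
      exact (habs_smul _ _).symm
    have hsmall : ‖lam‖ ≤ 2 * CE := by rw [hlam_eq]; exact hsmall0
    have hP3M : ∀ k l : ℤ, ¬(M ∣ (l - k)) → ¬(M ∣ (l - k - 1)) → ¬(M ∣ (l - k + 1)) →
        Dt (w k) (w l) ∈ Rs := by
      intro k l h1 h2 h3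
      apply hP3 k l <;> rwa [hMc]
    have hlamRs : lam ∈ Rs := by
      apply hP3M (i - 1) (i + 1)
      · rw [show i + 1 - (i - 1) = 2 by ring]
        exact not_dvd_of_bounds (by norm_num) (by omega)
      · rw [show i + 1 - (i - 1) - 1 = 1 by ring]
        exact not_dvd_of_bounds (by norm_num) (by omega)
      · rw [show i + 1 - (i - 1) + 1 = 3 by ring]
        exact not_dvd_of_bounds (by norm_num) (by omega)
    have hlamF : lam ∈ F := by
      refine ⟨hlamRs, ?_⟩
      rw [Metric.mem_closedBall, dist_zero_right]
      exact hsmall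
    have hlam0 : lam ≠ 0 := fun h => h0R (h ▸ hlamRs)
    set ee1 : ℂ := Dt (w (i - 1)) (w i) with hee1def
    set ee2 : ℂ := Dt (w i) (w (i + 1)) with hee2def
    have hee1E : ee1 ∈ E := by
      have := hP2 (i - 1)
      rwa [show i - 1 + 1 = i by ring] at this
    have hee2E : ee2 ∈ E := hP2 i
    -- the reduced polygon
    set v : ℤ → ℂ × ℂ := fun k => w (k + i + 1) with hvdef
    have vsh : ∀ (t k : ℤ), v (k + t * M) = σ ^ t • v k := by
      intro t k
      simp only [hvdef]
      rw [show k + t * M + i + 1 = (k + i + 1) + t * M by ring, wsh]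
    have vP2 : ∀ k : ℤ, Dt (v k) (v (k + 1)) ∈ E := by
      intro k
      simp only [hvdef]
      rw [show k + 1 + i + 1 = (k + i + 1) + 1 by ring]
      exact hP2 (k + i + 1)
    have vP3 : ∀ k l : ℤ, ¬(M ∣ (l - k)) → ¬(M ∣ (l - k - 1)) → ¬(M ∣ (l - k + 1)) →
        Dt (v k) (v l) ∈ Rs := by
      intro k l h1 h2 h3
      simp only [hvdef]
      apply hP3M (k + i + 1) (l + i + 1) <;>
        rw [show l + i + 1 - (k + i + 1) = l - k by ring] <;> assumption
    set w' : ℤ → ℂ × ℂ := fun k => v (psiF m k) with hw'def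
    have hmpos : 0 < m := by omega
    have hw'per : ∀ k : ℤ, w' (k + (m : ℤ)) = σ • w' k := by
      intro k
      simp only [hw'def]
      have h1 : k + (m:ℤ) = k + 1 * m := by ring
      rw [h1, psiF_shift m hmpos 1 k, show psiF m k + 1 * ((m:ℤ)+1) = psiF m k + 1 * M by rw [hMdef]]
      rw [vsh 1 (psiF m k), zpow_one]
    have hw'P2 : ∀ k : ℤ, Dt (w' k) (w' (k + 1)) ∈ E ∪ F := by
      intro k
      simp only [hw'def]
      by_cases hdv : (m:ℤ) ∣ (k + 1)
      · obtain ⟨hstep, hpos⟩ := psiF_succ_dvd m hmpos k hdv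
        set a : ℤ := (k + 1) / (m:ℤ) with hadef
        rw [hstep, hpos]
        rw [show a * ((m:ℤ)+1) - 2 + 2 = 0 + a * M from by rw [hMdef]; ring,
          show a * ((m:ℤ)+1) - 2 = -2 + a * M from by rw [hMdef]; ring,
          vsh, vsh, Dt_smul_smul]
        have h3 : σ ^ a * σ ^ a = 1 := by
          rw [← mul_zpow, hσσ, one_zpow]
        rw [h3, one_mul]
        right
        have h4 : v (-2 : ℤ) = w (i - 1) := by
          simp only [hvdef]; rw [show (-2 : ℤ) + i + 1 = i - 1 by ring]
        have h5 : v (0 : ℤ) = w (i + 1) := by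
          simp only [hvdef]; rw [show (0 : ℤ) + i + 1 = i + 1 by ring]
        rw [h4, h5, ← hlamdef]
        exact hlamF
      · rw [psiF_succ_nodvd m hmpos k hdv]
        exact Or.inl (vP2 (psiF m k))
    have hw'P3 : ∀ k l : ℤ, ¬((m:ℤ) ∣ (l - k)) → ¬((m:ℤ) ∣ (l - k - 1)) →
        ¬((m:ℤ) ∣ (l - k + 1)) → Dt (w' k) (w' l) ∈ Rs := by
      intro k l h1 h2 h3
      have hm' : (0:ℤ) < m := by exact_mod_cast hmpos
      set r : ℤ := (l - k) % (m:ℤ) with hrdef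
      set t : ℤ := (l - k) / (m:ℤ) with htdef
      have hlk : (m:ℤ) * t + r = l - k := Int.mul_ediv_add_emod _ _
      have hr0 : 0 ≤ r := Int.emod_nonneg _ (by omega)
      have hr1 : r < m := Int.emod_lt_of_pos _ hm'
      have hrne0 : r ≠ 0 := by
        intro hEq; exact h1 ⟨t, by linear_combination -hlk + hEq⟩
      have hrne1 : r ≠ 1 := by
        intro hEq; exact h2 ⟨t, by linear_combination -hlk + hEq⟩
      have hrnem : r ≠ (m:ℤ) - 1 := by
        intro hEq; exact h3 ⟨t + 1, by linear_combination -hlk + hEq⟩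
      have hl : l = (k + r) + t * (m:ℤ) := by linear_combination -hlk
      simp only [hw'def]
      rw [hl, psiF_shift m hmpos t (k + r)]
      set d : ℤ := psiF m (k + r) - psiF m k with hddef
      obtain ⟨hd1, hd2⟩ := psiF_diff m hmpos k r hr0 hr1
      have hdlo : 2 ≤ d := by omega
      have hdhi : d ≤ (m:ℤ) := by omega
      apply vP3
      · rw [show psiF m (k + r) + t * ((m:ℤ)+1) - psiF m k = d + t * M from by
          rw [hMdef, hddef]; ring]
        intro hdvd
        have hd : M ∣ d := by simpa using hdvd.sub (dvd_mul_left M t)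
        exact not_dvd_of_bounds (by omega) (by omega) hd
      · rw [show psiF m (k + r) + t * ((m:ℤ)+1) - psiF m k - 1 = (d - 1) + t * M from by
          rw [hMdef, hddef]; ring]
        intro hdvd
        have hd : M ∣ (d - 1) := by simpa using hdvd.sub (dvd_mul_left M t)
        exact not_dvd_of_bounds (by omega) (by omega) hd
      · rw [show psiF m (k + r) + t * ((m:ℤ)+1) - psiF m k + 1 = (d + 1) + t * M from by
          rw [hMdef, hddef]; ring]
        intro hdvd
        have hd : M ∣ (d + 1) := by simpa using hdvd.sub (dvd_mul_left M t)
        exact not_dvd_of_bounds (by omega) (by omega) hd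
    have hD'mem : (fun p : ℤ × ℤ => Dt (w' p.1) (w' p.2)) ∈ PolyD m (E ∪ F) Rs :=
      ⟨w', ⟨⟨σ, hσ, fun k => hw'per k⟩, hw'P2, hw'P3⟩, rfl⟩
    -- reconstruction of the original data
    have hchirec : ∀ j : ℤ, ¬ (M ∣ (j - i)) → w j = w' (chiF M (j - i - 1)) := by
      intro j hj
      have h1 : ¬ ((m:ℤ) + 1) ∣ ((j - i - 1) + 1) := by
        rw [show j - i - 1 + 1 = j - i by ring, ← hMdef]; exact hj
      simp only [hw'def]
      rw [show chiF M (j - i - 1) = chiF ((m:ℤ)+1) (j - i - 1) from by rw [hMdef]]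
      rw [psi_chi m hmpos _ h1]
      simp only [hvdef]
      rw [show j - i - 1 + i + 1 = j by ring]
    have hcomb : lam • w i = ee2 • w (i - 1) + ee1 • w (i + 1) := cramer _ _ _
    have hnd1 : ¬ (M ∣ ((i - 1) - i)) := by
      rw [show (i - 1) - i = -1 by ring]
      intro hdvd
      have h1 : M ∣ (1:ℤ) := (dvd_neg).mp hdvd
      have := Int.le_of_dvd one_pos h1; omega
    have hnd2 : ¬ (M ∣ ((i + 1) - i)) := by
      rw [show (i + 1) - i = 1 by ring]
      intro hdvd; have := Int.le_of_dvd one_pos hdvd; omega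
    set iN : ℕ := i.toNat with hiNdef
    have hiNc : (iN : ℤ) = i := Int.toNat_of_nonneg hib.1
    have htag : (iN, σ, lam, ee1, ee2) ∈ T := by
      refine ⟨?_, ?_, hlamF, hee1E, hee2E⟩
      · simp only [Set.mem_Iio]
        have := hib.2
        omega
      · rcases hσ with h | h <;> simp [h]
    apply Set.mem_biUnion htag
    refine ⟨(fun p : ℤ × ℤ => Dt (w' p.1) (w' p.2)), hD'mem, ?_⟩
    have hmain : ∀ k l : ℤ,
        recF m i σ lam ee1 ee2 (fun p : ℤ × ℤ => Dt (w' p.1) (w' p.2)) (k, l)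
          = Dt (w k) (w l) := by
      intro k l
      simp only [recF, ← hMdef]
      by_cases hk : M ∣ (k - i)
      · rw [if_pos hk]
        have hka : k = i + ((k - i) / M) * M := by
          have := Int.ediv_mul_cancel hk
          linarith
        by_cases hl : M ∣ (l - i)
        · rw [if_pos hl]
          have hla : l = i + ((l - i) / M) * M := by
            have := Int.ediv_mul_cancel hl
            linarith
          have hz : Dt (w k) (w l) = 0 := by
            conv_lhs => rw [hka, hla]
            rw [wsh, wsh, Dt_smul_smul, Dt_self, mul_zero]
          exact hz.symm
        · rw [if_neg hl]
          have hDt1 : Dt (w' (chiF M (i - 1 - i - 1))) (w' (chiF M (l - i - 1)))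
              = Dt (w (i - 1)) (w l) := by
            rw [show i - 1 - i - 1 = (i - 1) - i - 1 by ring,
              ← hchirec (i - 1) hnd1, ← hchirec l hl]
          have hDt2 : Dt (w' (chiF M (i + 1 - i - 1))) (w' (chiF M (l - i - 1)))
              = Dt (w (i + 1)) (w l) := by
            rw [show i + 1 - i - 1 = (i + 1) - i - 1 by ring,
              ← hchirec (i + 1) hnd2, ← hchirec l hl]
          have hlin : lam * Dt (w i) (w l)
              = ee2 * Dt (w (i - 1)) (w l) + ee1 * Dt (w (i + 1)) (w l) := by
            have h2 := congrArg (fun z => Dt z (w l)) hcomb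
            simpa only [Dt_smul_left, Dt_comb_left] using h2
          have hwk : Dt (w k) (w l) = σ ^ ((k - i) / M) * Dt (w i) (w l) := by
            conv_lhs => rw [hka]
            rw [wsh, Dt_smul_left]
          rw [hwk, hDt1, hDt2]
          congr 1
          rw [div_eq_iff hlam0]
          linear_combination -hlin
      · rw [if_neg hk]
        by_cases hl : M ∣ (l - i)
        · rw [if_pos hl]
          have hla : l = i + ((l - i) / M) * M := by
            have := Int.ediv_mul_cancel hl
            linarith
          have hDt1 : Dt (w' (chiF M (k - i - 1))) (w' (chiF M (i - 1 - i - 1)))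
              = Dt (w k) (w (i - 1)) := by
            rw [show i - 1 - i - 1 = (i - 1) - i - 1 by ring,
              ← hchirec (i - 1) hnd1, ← hchirec k hk]
          have hDt2 : Dt (w' (chiF M (k - i - 1))) (w' (chiF M (i + 1 - i - 1)))
              = Dt (w k) (w (i + 1)) := by
            rw [show i + 1 - i - 1 = (i + 1) - i - 1 by ring,
              ← hchirec (i + 1) hnd2, ← hchirec k hk]
          have hlin : lam * Dt (w k) (w i)
              = ee2 * Dt (w k) (w (i - 1)) + ee1 * Dt (w k) (w (i + 1)) := by
            have h2 := congrArg (fun z => Dt (w k) z) hcomb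
            simpa only [Dt_smul_right, Dt_comb_right] using h2
          have hwl : Dt (w k) (w l) = σ ^ ((l - i) / M) * Dt (w k) (w i) := by
            conv_lhs => rw [hla]
            rw [wsh, Dt_smul_right]
          rw [hwl, hDt1, hDt2]
          congr 1
          rw [div_eq_iff hlam0]
          linear_combination -hlin
        · rw [if_neg hl]
          rw [← hchirec k hk, ← hchirec l hl]
    funext p
    obtain ⟨k, l⟩ := p
    rw [hiNc]
    exact hmain k l

/-! ### Frieze patterns -/

/-- The quiddity sequence of a frieze. -/
def quid (c : ℤ × ℤ → ℂ) (j : ℤ) : ℂ := c (j - 1, j + 1)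

/-- Continuant-type recursion. -/
def cont (q : ℤ → ℂ) (i : ℤ) : ℕ → ℂ
  | 0 => 0
  | 1 => 1
  | (s + 2) => q (i + s + 1) * cont q i (s + 1) - cont q i s

section Frieze

variable {n : ℕ} {S : Set ℂ} {c : ℤ × ℤ → ℂ}

/-- The row recursion, valid inside the band. -/
lemma frec (hc : IsFrieze n S c) (h0S : (0:ℂ) ∉ S) :
    ∀ i k : ℤ, i + 1 ≤ k → k ≤ i + n + 2 →
      c (i, k + 1) = c (k - 1, k + 1) * c (i, k) - c (i, k - 1) := by
  obtain ⟨h0, h1, h2, h3, hS, hD⟩ := hc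
  suffices H : ∀ d : ℕ, ∀ i : ℤ, ((d:ℤ) ≤ (n:ℤ) + 1) →
      c (i, i + d + 2) = c (i + d, i + d + 2) * c (i, i + d + 1) - c (i, i + d) by
    intro i k hk1 hk2
    have hd : ((k - i - 1).toNat : ℤ) = k - i - 1 := Int.toNat_of_nonneg (by omega)
    have hh := H (k - i - 1).toNat i (by omega)
    rw [hd, show i + (k - i - 1) + 2 = k + 1 by ring, show i + (k - i - 1) + 1 = k by ring,
      show i + (k - i - 1) = k - 1 by ring] at hh
    exact hh
  intro d
  induction d with
  | zero =>
    intro i _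
    norm_num
    rw [h1 i, h0 i]
    ring
  | succ d ih =>
    intro i hdn
    push_cast at hdn ⊢
    have hdet1 := hD i (i + d + 2) (by omega) (by omega)
    have hdet2 := hD i (i + d + 1) (by omega) (by omega)
    have ihh := ih (i + 1) (by omega)
    rw [show i + 1 + (d:ℤ) + 2 = i + d + 2 + 1 by ring, show i + 1 + (d:ℤ) + 1 = i + d + 2 by ring,
      show i + 1 + (d:ℤ) = i + d + 1 by ring] at ihh
    -- ihh : c (i+1, i+d+3) = c (i+d+1, i+d+3) * c (i+1, i+d+2) - c (i+1, i+d+1)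
    rw [show i + ((d:ℤ) + 1) + 2 = i + d + 2 + 1 by ring,
      show i + ((d:ℤ) + 1) + 1 = i + d + 2 by ring,
      show i + ((d:ℤ) + 1) = i + d + 1 by ring]
    rw [show i + (d:ℤ) + 1 + 1 = i + d + 2 by ring] at hdet2
    have hnz : c (i + 1, i + d + 2) ≠ 0 := by
      rcases Nat.eq_zero_or_pos d with hd0 | hdpos
      · subst hd0
        push_cast
        have := h1 (i + 1)
        rw [show i + 1 + 1 = i + (0:ℤ) + 2 by ring] at this
        rw [this]
        norm_num
      · have hmem := hS (i + 1) (i + d + 2) (by omega) (by omega)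
        exact fun hz => h0S (hz ▸ hmem)
    have key : (c (i, i + d + 2 + 1)
        - (c (i + d + 1, i + d + 2 + 1) * c (i, i + d + 2) - c (i, i + d + 1)))
        * c (i + 1, i + d + 2) = 0 := by
      rw [show i + (d:ℤ) + 2 + 1 = i + d + 3 by ring] at *
      linear_combination (-1 : ℂ) * hdet1 + hdet2 + c (i, i + (d:ℤ) + 2) * ihh
    rcases mul_eq_zero.mp key with hk | hk
    · exact sub_eq_zero.mp hk
    · exact absurd hk hnz

/-- Columns recursion: the dual three-term relation. -/
lemma colrec (hc : IsFrieze n S c) (h0S : (0:ℂ) ∉ S) :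
    ∀ d : ℕ, ∀ i : ℤ, ((d:ℤ) ≤ (n:ℤ) + 1) →
      c (i + 1, i + 1 + d) = c (i - 1, i + 1) * c (i, i + 1 + d) - c (i - 1, i + 1 + d) := by
  obtain ⟨h0, h1, h2, h3, hS, hD⟩ := hc
  intro d
  induction d using Nat.twoStepInduction with
  | zero =>
    intro i _
    norm_num
    rw [h0 (i + 1), h1 i]
    ring
  | one =>
    intro i _
    push_cast
    have hf := frec ⟨h0, h1, h2, h3, hS, hD⟩ h0S (i - 1) (i + 1) (by omega) (by omega)
    rw [show i + 1 + 1 = i + 2 by ring, show i + 1 - 1 = i by ring] at hf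
    have hb1 : c (i - 1, i) = 1 := by
      have := h1 (i - 1); rwa [show i - 1 + 1 = i by ring] at this
    have hb2 : c (i + 1, i + 2) = 1 := by
      have := h1 (i + 1); rwa [show i + 1 + 1 = i + 2 by ring] at this
    rw [hb1] at hf
    rw [show i + 1 + (1:ℤ) = i + 2 by ring, hb2]
    linear_combination hf
  | more d ihd ihd1 =>
    intro i hdn
    have hF := frec ⟨h0, h1, h2, h3, hS, hD⟩ h0S
    have hA := hF (i + 1) (i + d + 2) (by omega) (by omega)
    have hB := hF i (i + d + 2) (by omega) (by omega)
    have hC := hF (i - 1) (i + d + 2) (by omega) (by omega)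
    have hI2 := ihd1 i (by push_cast; omega)
    have hI1 := ihd i (by push_cast; omega)
    push_cast at hI2 hI1 ⊢
    rw [show i + (d:ℤ) + 2 + 1 = i + (d:ℤ) + 3 by ring,
      show i + (d:ℤ) + 2 - 1 = i + (d:ℤ) + 1 by ring] at hA hB hC
    rw [show i + 1 + ((d:ℤ) + 1) = i + (d:ℤ) + 2 by ring] at hI2
    rw [show i + 1 + (d:ℤ) = i + (d:ℤ) + 1 by ring] at hI1
    rw [show i + 1 + ((d:ℤ) + 2) = i + (d:ℤ) + 3 by ring]
    linear_combination hA - c (i - 1, i + 1) * hB + hC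
      + c (i + (d:ℤ) + 1, i + (d:ℤ) + 3) * hI2 - hI1

lemma L4a (hc : IsFrieze n S c) (h0S : (0:ℂ) ∉ S) (i : ℤ) :
    c (i + 1, i + (n:ℤ) + 2) = quid c i := by
  obtain ⟨h0, h1, h2, h3, hS, hD⟩ := hc
  have hcol := colrec ⟨h0, h1, h2, h3, hS, hD⟩ h0S (n + 1) i (by push_cast; omega)
  push_cast at hcol
  rw [show i + 1 + ((n:ℤ) + 1) = i + (n:ℤ) + 2 by ring] at hcol
  have e3 : c (i, i + (n:ℤ) + 2) = 1 := h2 i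
  have e4 : c (i - 1, i + (n:ℤ) + 2) = 0 := by
    have := h3 (i - 1); rwa [show i - 1 + (n:ℤ) + 3 = i + (n:ℤ) + 2 by ring] at this
  rw [e3, e4] at hcol
  simp only [quid]
  linear_combination hcol

lemma L4b (hc : IsFrieze n S c) (h0S : (0:ℂ) ∉ S) (i : ℤ) :
    quid c (i + ((n:ℤ) + 3)) = c (i + 1, i + (n:ℤ) + 2) := by
  obtain ⟨h0, h1, h2, h3, hS, hD⟩ := hc
  have hf := frec ⟨h0, h1, h2, h3, hS, hD⟩ h0S (i + 1) (i + (n:ℤ) + 3) (by omega) (by omega)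
  have e1 : c (i + 1, i + (n:ℤ) + 4) = 0 := by
    have := h3 (i + 1); rwa [show i + 1 + (n:ℤ) + 3 = i + (n:ℤ) + 4 by ring] at this
  have e2 : c (i + 1, i + (n:ℤ) + 3) = 1 := by
    have := h2 (i + 1); rwa [show i + 1 + (n:ℤ) + 2 = i + (n:ℤ) + 3 by ring] at this
  rw [show i + (n:ℤ) + 3 + 1 = i + (n:ℤ) + 4 by ring,
    show i + (n:ℤ) + 3 - 1 = i + (n:ℤ) + 2 by ring, e1, e2] at hf
  simp only [quid]
  rw [show i + ((n:ℤ) + 3) - 1 = i + (n:ℤ) + 2 by ring,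
    show i + ((n:ℤ) + 3) + 1 = i + (n:ℤ) + 4 by ring]
  linear_combination -hf

lemma quid_per (hc : IsFrieze n S c) (h0S : (0:ℂ) ∉ S) (i : ℤ) :
    quid c (i + ((n:ℤ) + 3)) = quid c i :=
  (L4b hc h0S i).trans (L4a hc h0S i)

lemma contL (hc : IsFrieze n S c) (h0S : (0:ℂ) ∉ S) :
    ∀ s : ℕ, ∀ i : ℤ, (s:ℤ) ≤ (n:ℤ) + 3 → c (i, i + s) = cont (quid c) i s := by
  obtain ⟨h0, h1, h2, h3, hS, hD⟩ := hc
  intro s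
  induction s using Nat.twoStepInduction with
  | zero =>
    intro i _
    norm_num [cont]
    exact h0 i
  | one =>
    intro i _
    push_cast
    simp only [cont]
    exact h1 i
  | more s ih ih1 =>
    intro i hsn
    have hf := frec ⟨h0, h1, h2, h3, hS, hD⟩ h0S i (i + s + 1) (by omega) (by omega)
    rw [show i + (s:ℤ) + 1 + 1 = i + (s:ℤ) + 2 by ring,
      show i + (s:ℤ) + 1 - 1 = i + (s:ℤ) by ring] at hf
    have hI1 := ih1 i (by push_cast; omega)
    have hI0 := ih i (by push_cast; omega)
    push_cast at hI1 ⊢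
    rw [show i + ((s:ℤ) + 1) = i + (s:ℤ) + 1 by ring] at hI1
    rw [show i + ((s:ℤ) + 2) = i + (s:ℤ) + 2 by ring]
    simp only [cont]
    rw [← hI1, ← hI0]
    simp only [quid]
    rw [show i + (s:ℤ) + 1 - 1 = i + (s:ℤ) by ring, show i + (s:ℤ) + 1 + 1 = i + (s:ℤ) + 2 by ring]
    exact hf

/-- The basic vectors attached to a frieze. -/
def Bv (c : ℤ × ℤ → ℂ) : ℤ → ℂ × ℂ :=
  fun j => if j = 0 then ((0:ℂ), (-1:ℂ)) else (c (0, j), c (1, j))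

lemma detB (hc : IsFrieze n S c) (h0S : (0:ℂ) ∉ S) :
    ∀ a b : ℤ, 0 ≤ a → a ≤ b → b ≤ (n:ℤ) + 2 → Dt (Bv c a) (Bv c b) = c (a, b) := by
  obtain ⟨h0, h1, h2, h3, hS, hD⟩ := hc
  have main : ∀ (d : ℕ) (a : ℤ), 1 ≤ a → a + d ≤ (n:ℤ) + 2 →
      c (0, a) * c (1, a + d) - c (1, a) * c (0, a + d) = c (a, a + d) := by
    intro d
    induction d using Nat.twoStepInduction with
    | zero =>
      intro a _ _
      norm_num
      rw [h0 a]
      ring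
    | one =>
      intro a ha hb
      push_cast at hb ⊢
      have hd := hD 0 a (by omega) (by omega)
      norm_num at hd
      rw [h1 a]
      linear_combination hd
    | more d ih ih1 =>
      intro a ha hb
      push_cast at hb ⊢
      have hF := frec ⟨h0, h1, h2, h3, hS, hD⟩ h0S
      have h0r := hF 0 (a + d + 1) (by omega) (by omega)
      have h1r := hF 1 (a + d + 1) (by omega) (by omega)
      have har := hF a (a + d + 1) (by omega) (by omega)
      rw [show a + (d:ℤ) + 1 + 1 = a + (d:ℤ) + 2 by ring,
        show a + (d:ℤ) + 1 - 1 = a + (d:ℤ) by ring] at h0r h1r har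
      have hI1 := ih1 a ha (by push_cast; omega)
      have hI0 := ih a ha (by omega)
      push_cast at hI1
      rw [show a + ((d:ℤ) + 1) = a + (d:ℤ) + 1 by ring] at hI1
      rw [show a + ((d:ℤ) + 2) = a + (d:ℤ) + 2 by ring]
      linear_combination c (0, a) * h1r - c (1, a) * h0r - har
        + c (a + (d:ℤ), a + (d:ℤ) + 2) * hI1 - hI0
  intro a b ha hab hbn
  by_cases ha0 : a = 0
  · subst ha0
    by_cases hb0 : b = 0
    · subst hb0
      rw [Dt_self, h0 0]
    · rw [show Bv c 0 = ((0:ℂ), (-1:ℂ)) from by simp [Bv],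
        show Bv c b = (c (0, b), c (1, b)) from by simp [Bv, hb0]]
      simp only [Dt]
      ring
  · have hb0 : b ≠ 0 := by omega
    have hd : ((b - a).toNat : ℤ) = b - a := Int.toNat_of_nonneg (by omega)
    have hm := main (b - a).toNat a (by omega) (by omega)
    rw [hd, show a + (b - a) = b by ring] at hm
    rw [show Bv c a = (c (0, a), c (1, a)) from by simp [Bv, ha0],
      show Bv c b = (c (0, b), c (1, b)) from by simp [Bv, hb0]]
    simp only [Dt]
    exact hm

lemma neg_one_zpow_or (t : ℤ) : ((-1:ℂ)) ^ t = 1 ∨ ((-1:ℂ)) ^ t = -1 := by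
  rcases Int.even_or_odd t with h | h
  · exact Or.inl h.neg_one_zpow
  · exact Or.inr h.neg_one_zpow

lemma per_trans (f g : ℤ → ℂ) (N : ℤ) (hN : 0 < N)
    (hf : ∀ x, f (x + N) = f x) (hg : ∀ x, g (x + N) = g x)
    (hbase : ∀ x, 1 ≤ x → x ≤ N → f x = g x) : ∀ x, f x = g x := by
  have hshift : ∀ (h : ℤ → ℂ), (∀ y, h (y + N) = h y) →
      ∀ (t : ℤ) (y : ℤ), h (y + t * N) = h y := by
    intro h hh t
    induction t using Int.induction_on with
    | zero => intro y; norm_num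
    | succ s ih =>
      intro y
      rw [show y + ((s:ℤ) + 1) * N = (y + s * N) + N by ring, hh, ih]
    | pred s ih =>
      intro y
      have h2 := hh (y + (-(s:ℤ) - 1) * N)
      rw [show y + (-(s:ℤ) - 1) * N + N = y + (-(s:ℤ)) * N by ring] at h2
      rw [← h2, ih]
  intro x
  have hx0a : 0 ≤ (x - 1) % N := Int.emod_nonneg _ (by omega)
  have hx0b : (x - 1) % N < N := Int.emod_lt_of_pos _ hN
  have hxe : x = (1 + (x - 1) % N) + ((x - 1) / N) * N := by
    have h := emod_add_ediv' (x - 1) N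
    linarith
  rw [hxe, hshift f hf, hshift g hg]
  exact hbase _ (by omega) (by omega)

end Frieze

end

end Stmt7Aux

open Stmt7Aux in
/-- If `R ⊆ ℂ` is discrete (no accumulation point in `ℂ`), then for each `n ≥ 1` the set of
restrictions to the band `B_n = {(i,j) : i ≤ j ≤ i + n + 3}` of frieze patterns of height
`n` over `R \ {0}` is finite. -/
theorem stmt7 (R : Set ℂ)
    (hdisc : ∀ x : ℂ, ¬ AccPt x (Filter.principal R))
    (n : ℕ) (hn : 1 ≤ n) :
    {g : {p : ℤ × ℤ // p.1 ≤ p.2 ∧ p.2 ≤ p.1 + n + 3} → ℂ |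
      ∃ c : ℤ × ℤ → ℂ, IsFrieze n (R \ {0}) c ∧ ∀ p, g p = c p.1}.Finite := by
  classical
  set R0 : Set ℂ := {z : ℂ | (z ∈ R ∨ -z ∈ R) ∧ z ≠ 0} with hR0def
  have hcore : ∀ r : ℝ, ((R ∩ Metric.closedBall 0 r)).Finite := by
    intro r
    by_contra h
    obtain ⟨x, -, hacc⟩ := (show Set.Infinite _ from h).exists_accPt_of_subset_isCompact
      (isCompact_closedBall (0:ℂ) r) Set.inter_subset_right
    exact hdisc x (hacc.mono (Filter.principal_mono.2 Set.inter_subset_left))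
  have hR0fin : ∀ r : ℝ, (R0 ∩ Metric.closedBall 0 r).Finite := by
    intro r
    apply Set.Finite.subset (((hcore r).union ((hcore r).image (fun z => -z))))
    rintro z ⟨⟨hz | hz, hz0⟩, hzB⟩
    · exact Or.inl ⟨hz, hzB⟩
    · refine Or.inr ⟨-z, ⟨hz, ?_⟩, neg_neg z⟩
      rw [Metric.mem_closedBall, dist_zero_right] at hzB ⊢
      rw [norm_neg]
      exact hzB
  have h0R0 : (0:ℂ) ∉ R0 := fun h => h.2 rfl
  have hR0neg : ∀ z : ℂ, z ∈ R0 → -z ∈ R0 := by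
    rintro z ⟨hz | hz, hz0⟩
    · exact ⟨Or.inr (by rwa [neg_neg]), neg_ne_zero.2 hz0⟩
    · exact ⟨Or.inl hz, neg_ne_zero.2 hz0⟩
  have hpfin := polyD_finite R0 hR0fin h0R0 (n + 3) (by omega) {1}
    (Set.finite_singleton 1) (by simp)
  set ΨF : (ℤ × ℤ → ℂ) → ({p : ℤ × ℤ // p.1 ≤ p.2 ∧ p.2 ≤ p.1 + n + 3} → ℂ) :=
    fun D => fun p => cont (fun j => D (j - 1, j + 1)) p.val.1 (p.val.2 - p.val.1).toNat
    with hPsidef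
  apply Set.Finite.subset (hpfin.image ΨF)
  rintro g ⟨c, hc, hg⟩
  have hc' := hc
  have h0S : (0:ℂ) ∉ R \ {0} := fun h => h.2 rfl
  obtain ⟨h0, h1, h2, h3, hS, hD⟩ := hc
  set N : ℤ := (n:ℤ) + 3 with hNdef
  have hN4 : (4:ℤ) ≤ N := by omega
  have hNnat : ((n + 3 : ℕ) : ℤ) = N := by rw [hNdef]; push_cast; ring
  set B : ℤ → ℂ × ℂ := Bv c with hBdef
  set w : ℤ → ℂ × ℂ := fun j => ((-1:ℂ) ^ (j / N)) • B (j % N) with hwdef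
  have hdetB : ∀ a b : ℤ, 0 ≤ a → a ≤ b → b ≤ (n:ℤ) + 2 → Dt (B a) (B b) = c (a, b) := by
    intro a b ha hab hbn
    rw [hBdef]
    exact detB hc' h0S a b ha hab hbn
  have hwperN : ∀ k : ℤ, w (k + N) = (-1:ℂ) • w k := by
    intro k
    simp only [hwdef]
    have hdiv : (k + N) / N = k / N + 1 := by
      have h := Int.add_mul_ediv_right k 1 (show N ≠ 0 by omega)
      rwa [one_mul] at h
    have hmod : (k + N) % N = k % N := by
      have h := Int.add_mul_emod_self_left (a := k) (b := N) (c := 1)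
      rwa [mul_one] at h
    rw [hdiv, hmod, zpow_add₀ (by norm_num : (-1:ℂ) ≠ 0), zpow_one, mul_comm, mul_smul]
  have hwin : ∀ x : ℤ, 0 ≤ x → x < N → w x = B x := by
    intro x hx0 hxN
    simp only [hwdef]
    rw [Int.ediv_eq_zero_of_lt hx0 hxN, Int.emod_eq_of_lt hx0 hxN, zpow_zero, one_smul]
  have hP2 : ∀ k : ℤ, Dt (w k) (w (k + 1)) ∈ ({1} : Set ℂ) := by
    intro k
    simp only [Set.mem_singleton_iff]
    have ha0 : 0 ≤ k % N := Int.emod_nonneg k (by omega)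
    have ha1 : k % N < N := Int.emod_lt_of_pos k (by omega)
    have hk := emod_add_ediv' k N
    by_cases hdvd : N ∣ (k + 1)
    · obtain ⟨hdiv, hmod⟩ := ediv_succ_dvd (show (0:ℤ) < N by omega) hdvd
      have hmod1 : (k + 1) % N = 0 := Int.emod_eq_zero_of_dvd hdvd
      simp only [hwdef]
      rw [hdiv, hmod, hmod1, Dt_smul_smul]
      have hsign : ((-1:ℂ)) ^ (k / N) * ((-1:ℂ)) ^ (k / N + 1) = -1 := by
        rw [zpow_add₀ (by norm_num : (-1:ℂ) ≠ 0), zpow_one, ← mul_assoc, ← mul_zpow]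
        norm_num
      rw [hsign]
      have hB0 : Dt (B (N - 1)) (B 0) = -1 := by
        rw [Dt_swap]
        rw [hdetB 0 (N - 1) (le_refl 0) (by omega) (by omega)]
        have hh := h2 0
        rw [show (0:ℤ) + (n:ℤ) + 2 = N - 1 by omega] at hh
        rw [hh]
      rw [hB0]
      norm_num
    · obtain ⟨hdiv, hmod⟩ := ediv_succ_not_dvd (show (0:ℤ) < N by omega) hdvd
      have ha2 : k % N ≠ N - 1 := by
        intro hEq
        exact hdvd ⟨k / N + 1, by linear_combination hk + hEq⟩
      simp only [hwdef]
      rw [hdiv, hmod, Dt_smul_smul, ← mul_zpow]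
      norm_num
      rw [hdetB (k % N) (k % N + 1) ha0 (by omega) (by omega)]
      exact h1 (k % N)
  have hP3 : ∀ k l : ℤ, ¬(N ∣ (l - k)) → ¬(N ∣ (l - k - 1)) → ¬(N ∣ (l - k + 1)) →
      Dt (w k) (w l) ∈ R0 := by
    intro k l hc1 hc2 hc3
    set a : ℤ := k % N with hadef
    set b : ℤ := l % N with hbdef
    have ha0 : 0 ≤ a := Int.emod_nonneg k (by omega)
    have ha1 : a < N := Int.emod_lt_of_pos k (by omega)
    have hb0 : 0 ≤ b := Int.emod_nonneg l (by omega)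
    have hb1 : b < N := Int.emod_lt_of_pos l (by omega)
    have hdiffeq : l - k = (b - a) + (l / N - k / N) * N := by
      have hk := emod_add_ediv' k N
      have hl := emod_add_ediv' l N
      linear_combination hl - hk
    have hnd0 : ¬ N ∣ (b - a) := by
      intro h
      exact hc1 (by
        rw [show l - k = (b - a) + (l / N - k / N) * N from hdiffeq]
        exact dvd_add h (dvd_mul_left N _))
    have hnd1 : ¬ N ∣ (b - a - 1) := by
      intro h
      exact hc2 (by
        rw [show l - k - 1 = (b - a - 1) + (l / N - k / N) * N from by linear_combination hdiffeq]
        exact dvd_add h (dvd_mul_left N _))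
    have hnd2 : ¬ N ∣ (b - a + 1) := by
      intro h
      exact hc3 (by
        rw [show l - k + 1 = (b - a + 1) + (l / N - k / N) * N from by linear_combination hdiffeq]
        exact dvd_add h (dvd_mul_left N _))
    have hred : Dt (w k) (w l) = ((-1:ℂ) ^ (k / N + l / N)) * Dt (B a) (B b) := by
      simp only [hwdef]
      rw [Dt_smul_smul, ← zpow_add₀ (by norm_num : (-1:ℂ) ≠ 0)]
    have hDB : Dt (B a) (B b) ∈ R0 := by
      rcases lt_trichotomy a b with hab | hab | hab
      · have hab1 : a + 2 ≤ b := by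
          rcases eq_or_lt_of_le (by omega : a + 1 ≤ b) with hEq | hlt
          · exfalso; exact hnd1 (by rw [show b - a - 1 = 0 by omega]; exact dvd_zero N)
          · omega
        have hab2 : b - a ≠ N - 1 := by
          intro hEq
          exact hnd2 ⟨1, by rw [mul_one]; omega⟩
        rw [hdetB a b ha0 (le_of_lt hab) (by omega)]
        have hmem := hS a b hab1 (by omega)
        exact ⟨Or.inl hmem.1, fun hz => hmem.2 (by simp [hz])⟩
      · exfalso
        exact hnd0 (by rw [show b - a = 0 by omega]; exact dvd_zero N)
      · have hba1 : b + 2 ≤ a := by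
          rcases eq_or_lt_of_le (by omega : b + 1 ≤ a) with hEq | hlt
          · exfalso; exact hnd2 (by rw [show b - a + 1 = 0 by omega]; exact dvd_zero N)
          · omega
        have hba2 : a - b ≠ N - 1 := by
          intro hEq
          exact hnd1 ⟨-1, by omega⟩
        rw [Dt_swap, hdetB b a hb0 (le_of_lt hab) (by omega)]
        have hmem := hS b a hba1 (by omega)
        exact hR0neg _ ⟨Or.inl hmem.1, fun hz => hmem.2 (by simp [hz])⟩
    rw [hred]
    rcases neg_one_zpow_or (k / N + l / N) with hsg | hsg
    · rw [hsg, one_mul]; exact hDB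
    · rw [hsg]
      have := hR0neg _ hDB
      rwa [show (-1:ℂ) * Dt (B a) (B b) = -(Dt (B a) (B b)) by ring]
  have hpoly : IsPoly (n + 3) ({1} : Set ℂ) R0 w := by
    refine ⟨⟨-1, Or.inr rfl, ?_⟩, hP2, ?_⟩
    · intro k
      rw [hNnat]
      exact hwperN k
    · intro k l hh1 hh2 hh3
      rw [hNnat] at hh1 hh2 hh3
      exact hP3 k l hh1 hh2 hh3
  -- identification of the quiddity
  have hQD : ∀ j : ℤ, Dt (w (j - 1)) (w (j + 1)) = quid c j := by
    apply per_trans _ _ N (by omega)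
    · intro x
      rw [show x + N - 1 = (x - 1) + N by ring, show x + N + 1 = (x + 1) + N by ring,
        hwperN, hwperN, Dt_smul_smul]
      norm_num
    · intro x
      have := quid_per hc' h0S x
      rwa [show x + ((n:ℤ) + 3) = x + N by rw [hNdef]] at this
    · intro j hj1 hjN
      by_cases hj : j ≤ N - 2
      · rw [hwin (j - 1) (by omega) (by omega), hwin (j + 1) (by omega) (by omega),
          hdetB (j - 1) (j + 1) (by omega) (by omega) (by omega)]
        rfl
      · rcases (by omega : j = N - 1 ∨ j = N) with hEq | hEq
        · subst hEq
          have hwN : w N = (-1:ℂ) • B 0 := by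
            have hh := hwperN 0
            rw [zero_add] at hh
            rw [hh, hwin 0 (le_refl 0) (by omega)]
          rw [show N - 1 + 1 = N by ring, hwN, hwin (N - 1 - 1) (by omega) (by omega),
            Dt_smul_right, Dt_swap, show N - 1 - 1 = N - 2 by ring,
            hdetB 0 (N - 2) (le_refl 0) (by omega) (by omega)]
          have hL := L4b hc' h0S (-1)
          rw [show (-1:ℤ) + ((n:ℤ) + 3) = N - 1 by omega, show (-1:ℤ) + 1 = 0 by ring,
            show (-1:ℤ) + (n:ℤ) + 2 = N - 2 by omega] at hL
          rw [← hL]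
          ring
        · subst hEq
          have hwN1 : w (N + 1) = (-1:ℂ) • B 1 := by
            have hh := hwperN 1
            rw [show (1:ℤ) + N = N + 1 by ring] at hh
            rw [hh, hwin 1 (by omega) (by omega)]
          rw [hwN1, hwin (N - 1) (by omega) (by omega), Dt_smul_right, Dt_swap,
            hdetB 1 (N - 1) (by omega) (by omega) (by omega)]
          have hL := L4b hc' h0S 0
          rw [show (0:ℤ) + ((n:ℤ) + 3) = N by omega, show (0:ℤ) + 1 = 1 by ring,
            show (0:ℤ) + (n:ℤ) + 2 = N - 1 by omega] at hL
          rw [← hL]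
          ring
  refine ⟨(fun p : ℤ × ℤ => Dt (w p.1) (w p.2)), ⟨w, hpoly, rfl⟩, ?_⟩
  funext p
  obtain ⟨⟨i, j⟩, hij⟩ := p
  simp only [hPsidef]
  have hfun : (fun j : ℤ => Dt (w (j - 1)) (w (j + 1))) = quid c := funext fun j => hQD j
  show cont (fun j : ℤ => Dt (w (j - 1)) (w (j + 1))) i (j - i).toNat = g ⟨(i, j), hij⟩
  rw [hfun, hg ⟨(i, j), hij⟩]
  have hdtn : (((j - i).toNat : ℤ)) = j - i := Int.toNat_of_nonneg (by exact sub_nonneg.2 hij.1)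
  have hcl := contL hc' h0S (j - i).toNat i (by rw [hdtn]; have := hij.2; omega)
  rw [hdtn, show i + (j - i) = j by ring] at hcl
  exact hcl.symm
end

section
/- Let R ⊆ ℂ be a subring containing infinitely many divisors of 2, i.e. the set { t ∈ R : t ≠ 0 and 2/t ∈ R } is infinite. Then for each n ≥ 1 there are infinitely many frieze patterns of height n over R \ {0}; precisely, the set of restrictions to the band B_n = {(i,j) ∈ ℤ² : i ≤ j ≤ i+n+3} of frieze patterns of height n over R \ {0} is an infinite set. -/
open Function

def wedge {K : Type*} [CommRing K] (a b : K × K) : K := a.1 * b.2 - a.2 * b.1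

section Wedge

variable {K : Type*} [CommRing K]

@[simp]
lemma wedge_self (a : K × K) : wedge a a = 0 := by
  simp only [wedge]; ring

lemma wedge_anticomm (a b : K × K) : wedge b a = -wedge a b := by
  simp only [wedge]; ring

@[simp]
lemma wedge_neg_right (a b : K × K) : wedge a (-b) = -wedge a b := by
  simp only [wedge, Prod.snd_neg, Prod.fst_neg]; ring

@[simp]
lemma wedge_neg_left (a b : K × K) : wedge (-a) b = -wedge a b := by
  simp only [wedge, Prod.snd_neg, Prod.fst_neg]; ring

lemma wedge_mul_wedge_sub_wedge_mul_wedge (a b c d : K × K) :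
    wedge a c * wedge b d - wedge a d * wedge b c = wedge a b * wedge c d := by
  simp only [wedge]; ring

end Wedge

lemma Function.Periodic.apply_emod {α : Type*} {f : ℤ → α} {m : ℤ} (hf : Periodic f m) (k : ℤ) :
    f k = f (k % m) := by
  rw [Int.emod_def, mul_comm]
  exact (hf.sub_int_mul_eq (k / m)).symm

section Tiling

variable {K : Type*} [CommRing K] {v : ℤ → K × K} {m : ℤ}

lemma wedge_add_one_eq_one_of_antiperiodic (hv : Antiperiodic v m)
    (h : ∀ k, 0 ≤ k → k < m → wedge (v k) (v (k + 1)) = 1) (hm : 0 < m) (k : ℤ) :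
    wedge (v k) (v (k + 1)) = 1 := by
  have hper : Periodic (fun k => wedge (v k) (v (k + 1))) m := fun k => by
    simp only [add_right_comm k m 1, hv _, wedge_neg_left, wedge_neg_right, neg_neg]
  rw [hper.apply_emod]
  exact h _ (Int.emod_nonneg k hm.ne') (Int.emod_lt_of_pos k hm)

lemma wedge_mem_of_antiperiodic {S : Set K} (hv : Antiperiodic v m)
    (h : ∀ a b, 0 ≤ a → a + 2 ≤ b → b < m → b ≤ a + m - 2 → wedge (v a) (v b) ∈ S)
    (hm : 0 < m) {i j : ℤ} (hij : i + 2 ≤ j) (hji : j ≤ i + m - 2) :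
    wedge (v i) (v j) ∈ S := by
  have hper : Periodic (fun k => wedge (v k) (v (k + (j - i)))) m := fun k => by
    simp only [add_right_comm k m, hv _, wedge_neg_left, wedge_neg_right, neg_neg]
  obtain ⟨a, rfl⟩ : ∃ a, i % m = a := ⟨_, rfl⟩
  have ha0 := Int.emod_nonneg i hm.ne'
  have ham := Int.emod_lt_of_pos i hm
  have key := hper.apply_emod i
  simp only [add_sub_cancel] at key
  rw [key]
  rcases lt_or_ge (i % m + (j - i)) m with hlt | hge
  · exact h _ _ ha0 (by omega) hlt (by omega)
  · -- a pair straddling the antiperiod is brought back by `det (v a, v b) = det (v (b - m), v a)`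
    have hwrap : v (i % m + (j - i)) = -v (i % m + (j - i) - m) := by
      rw [← hv, sub_add_cancel]
    rw [hwrap, wedge_neg_right, ← wedge_anticomm]
    exact h _ _ (by omega) (by omega) ham (by omega)

end Tiling

lemma isFrieze_wedge {n : ℕ} {S : Set ℂ} {v : ℤ → ℂ × ℂ} (hv : Antiperiodic v (n + 3))
    (h1 : ∀ k, wedge (v k) (v (k + 1)) = 1)
    (hS : ∀ i j : ℤ, i + 2 ≤ j → j ≤ i + n + 1 → wedge (v i) (v j) ∈ S) :
    IsFrieze n S (fun p => wedge (v p.1) (v p.2)) := by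
  refine ⟨fun i => wedge_self _, h1, fun i => ?_, fun i => ?_, hS, fun i j _ _ => ?_⟩
  · have := h1 (i - 1)
    dsimp only
    rw [show i + n + 2 = i - 1 + (n + 3) by ring, hv, wedge_neg_right, ← wedge_anticomm]
    simpa using this
  · dsimp only
    rw [show i + n + 3 = i + (n + 3) by ring, hv, wedge_neg_right, wedge_self, neg_zero]
  · dsimp only
    rw [wedge_mul_wedge_sub_wedge_mul_wedge, h1, h1, one_mul]

noncomputable section Construction

variable (n : ℕ) (t : ℂ)

def friezeBase (r : ℤ) : ℂ × ℂ :=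
  if r = 0 then (1, 0)
  else if r = 1 then (0, 1)
  else if r = n + 2 then (-(2 / t), 1)
  else (-1, t + (n + 1 - r : ℤ))

def friezeVec (k : ℤ) : ℂ × ℂ :=
  ((k / (n + 3)).negOnePow : ℤ) • friezeBase n t (k % (n + 3))

def friezeOf (p : ℤ × ℤ) : ℂ := wedge (friezeVec n t p.1) (friezeVec n t p.2)

lemma friezeVec_antiperiodic : Antiperiodic (friezeVec n t) (n + 3) := fun k => by
  have hm : (n : ℤ) + 3 ≠ 0 := by omega
  simp only [friezeVec, Int.add_ediv_of_dvd_right (dvd_refl _), Int.ediv_self hm,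
    Int.add_emod_right, Int.negOnePow_succ, Units.val_neg, neg_smul]

lemma friezeVec_of_nonneg_of_lt {k : ℤ} (h0 : 0 ≤ k) (hk : k < n + 3) :
    friezeVec n t k = friezeBase n t k := by
  rw [friezeVec, Int.ediv_eq_zero_of_lt h0 hk, Int.emod_eq_of_lt h0 hk, Int.negOnePow_zero,
    Units.val_one, one_smul]

lemma friezeBase_zero : friezeBase n t 0 = (1, 0) := by simp [friezeBase]

lemma friezeBase_one : friezeBase n t 1 = (0, 1) := by simp [friezeBase]

lemma friezeBase_last : friezeBase n t (n + 2) = (-(2 / t), 1) := by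
  rw [friezeBase, if_neg (by omega), if_neg (by omega), if_pos rfl]

lemma friezeBase_of_two_le_of_le {r : ℤ} (h2 : 2 ≤ r) (hr : r ≤ n + 1) :
    friezeBase n t r = (-1, t + (n + 1 - r : ℤ)) := by
  rw [friezeBase, if_neg (by omega), if_neg (by omega), if_neg (by omega)]

variable {n t}

lemma wedge_friezeVec_add_one (hn : 1 ≤ n) (ht : t ≠ 0) (k : ℤ) :
    wedge (friezeVec n t k) (friezeVec n t (k + 1)) = 1 := by
  refine wedge_add_one_eq_one_of_antiperiodic (friezeVec_antiperiodic n t) (fun k h0 hk => ?_)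
    (by omega) k
  rw [friezeVec_of_nonneg_of_lt n t h0 hk]
  rcases (by omega : k = 0 ∨ k = 1 ∨ (2 ≤ k ∧ k ≤ n) ∨ k = n + 1 ∨ k = n + 2) with
    rfl | rfl | ⟨h2, hkn⟩ | rfl | rfl
  · rw [friezeVec_of_nonneg_of_lt n t (by omega) (by omega), friezeBase_zero, zero_add,
      friezeBase_one]
    simp [wedge]
  · rw [friezeVec_of_nonneg_of_lt n t (by omega) (by omega), friezeBase_one,
      one_add_one_eq_two, friezeBase_of_two_le_of_le n t le_rfl (by omega)]
    simp [wedge]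
  · rw [friezeVec_of_nonneg_of_lt n t (by omega) (by omega),
      friezeBase_of_two_le_of_le n t h2 (by omega),
      friezeBase_of_two_le_of_le n t (by omega) (by omega)]
    simp only [wedge]
    push_cast
    ring
  · rw [friezeVec_of_nonneg_of_lt n t (by omega) (by omega), add_assoc, one_add_one_eq_two,
      friezeBase_last, friezeBase_of_two_le_of_le n t (by omega) le_rfl]
    simp only [wedge, sub_self, Int.cast_zero, add_zero]
    field_simp
    ring
  · rw [add_assoc, show (2 : ℤ) + 1 = 3 by norm_num, ← zero_add ((n : ℤ) + 3),
      friezeVec_antiperiodic, friezeVec_of_nonneg_of_lt n t le_rfl (by omega), friezeBase_zero,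
      friezeBase_last]
    simp [wedge]

lemma wedge_friezeBase_mem {R : Subring ℂ} (htR : t ∈ R) (h2t : 2 / t ∈ R)
    (hnz : ∀ k : ℤ, 0 ≤ k → k ≤ 2 * n → t + k ≠ 0) {a b : ℤ} (ha : 0 ≤ a) (hab : a + 2 ≤ b)
    (hb : b ≤ n + 2) (hba : b ≤ a + n + 1) :
    wedge (friezeBase n t a) (friezeBase n t b) ∈ (R : Set ℂ) \ {0} := by
  have ht : t ≠ 0 := by simpa using hnz 0 le_rfl (by omega)
  rcases (by omega : a = 0 ∨ a = 1 ∨ 2 ≤ a) with rfl | rfl | ha2 <;>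
    rcases (by omega : b ≤ n + 1 ∨ b = n + 2) with hb1 | rfl
  · rw [friezeBase_zero, friezeBase_of_two_le_of_le n t (by omega) hb1]
    simp only [wedge, one_mul, zero_mul, sub_zero]
    exact ⟨add_mem htR (intCast_mem R _), hnz _ (by omega) (by omega)⟩
  · omega
  · rw [friezeBase_one, friezeBase_of_two_le_of_le n t (by omega) hb1]
    simp only [wedge]
    norm_num
  · rw [friezeBase_one, friezeBase_last]
    simp only [wedge, zero_mul, one_mul, zero_sub, neg_neg]
    exact ⟨h2t, div_ne_zero two_ne_zero ht⟩
  · rw [friezeBase_of_two_le_of_le n t ha2 (by omega),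
      friezeBase_of_two_le_of_le n t (by omega) hb1]
    have hval : wedge ((-1 : ℂ), t + ((n + 1 - a : ℤ) : ℂ)) (-1, t + ((n + 1 - b : ℤ) : ℂ)) =
        (b - a : ℤ) := by
      simp only [wedge]
      push_cast
      ring
    rw [hval]
    exact ⟨intCast_mem R _, Int.cast_ne_zero.mpr (by omega)⟩
  · rw [friezeBase_of_two_le_of_le n t ha2 (by omega), friezeBase_last]
    have hval : wedge ((-1 : ℂ), t + ((n + 1 - a : ℤ) : ℂ)) (-(2 / t), 1) =
        1 + (n + 1 - a : ℤ) * (2 / t) := by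
      simp only [wedge]
      field_simp
      ring
    have hquot : (1 : ℂ) + (n + 1 - a : ℤ) * (2 / t) = (t + (2 * (n + 1 - a) : ℤ)) / t := by
      push_cast
      field_simp
    rw [hval]
    refine ⟨add_mem (one_mem R) (mul_mem (intCast_mem R _) h2t), ?_⟩
    rw [Set.mem_singleton_iff, hquot]
    exact div_ne_zero (hnz _ (by omega) (by omega)) ht

lemma isFrieze_friezeOf {R : Subring ℂ} (hn : 1 ≤ n) (htR : t ∈ R) (h2t : 2 / t ∈ R)
    (hnz : ∀ k : ℤ, 0 ≤ k → k ≤ 2 * n → t + k ≠ 0) :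
    IsFrieze n ((R : Set ℂ) \ {0}) (friezeOf n t) := by
  have ht : t ≠ 0 := by simpa using hnz 0 le_rfl (by omega)
  refine isFrieze_wedge (friezeVec_antiperiodic n t) (wedge_friezeVec_add_one hn ht)
    fun i j hij hji => wedge_mem_of_antiperiodic (friezeVec_antiperiodic n t)
      (fun a b ha hab hb hba => ?_) (by omega) hij (by omega)
  rw [friezeVec_of_nonneg_of_lt n t ha (by omega), friezeVec_of_nonneg_of_lt n t (by omega) hb]
  exact wedge_friezeBase_mem htR h2t hnz ha hab (by omega) (by omega)

lemma friezeOf_zero_succ (hn : 1 ≤ n) : friezeOf n t (0, n + 1) = t := by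
  rw [friezeOf, friezeVec_of_nonneg_of_lt n t le_rfl (by omega),
    friezeVec_of_nonneg_of_lt n t (by omega) (by omega), friezeBase_zero,
    friezeBase_of_two_le_of_le n t (by omega) le_rfl]
  simp [wedge]

end Construction

/-- If the subring `R ⊆ ℂ` contains infinitely many divisors of `2`, then for each `n ≥ 1`
the set of restrictions to the band `B_n` of frieze patterns of height `n` over `R \ {0}`
is infinite. -/
theorem stmt8 (R : Subring ℂ)
    (h2 : {t : ℂ | t ∈ R ∧ t ≠ 0 ∧ 2 / t ∈ R}.Infinite)
    (n : ℕ) (hn : 1 ≤ n) :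
    {g : {p : ℤ × ℤ // p.1 ≤ p.2 ∧ p.2 ≤ p.1 + n + 3} → ℂ |
      ∃ c : ℤ × ℤ → ℂ, IsFrieze n ((R : Set ℂ) \ {0}) c ∧ ∀ p, g p = c p.1}.Infinite := by
  set bad : Set ℂ := (fun k : ℤ => -(k : ℂ)) '' Set.Icc 0 (2 * n)
  have hgood : ({t : ℂ | t ∈ R ∧ t ≠ 0 ∧ 2 / t ∈ R} \ bad).Infinite :=
    h2.sdiff ((Set.finite_Icc _ _).image _)
  refine Set.infinite_of_injOn_mapsTo (f := fun t p => friezeOf n t p.1) ?_ ?_ hgood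
  · intro s _ t _ hst
    have hband : (0 : ℤ) ≤ n + 1 ∧ (n : ℤ) + 1 ≤ 0 + n + 3 := by omega
    simpa only [friezeOf_zero_succ hn] using congrFun hst ⟨(0, n + 1), hband⟩
  · rintro t ⟨⟨htR, -, h2t⟩, htbad⟩
    refine ⟨friezeOf n t, isFrieze_friezeOf hn htR h2t fun k hk0 hk hzero => htbad ?_,
      fun _ => rfl⟩
    exact ⟨k, ⟨hk0, hk⟩, (eq_neg_of_add_eq_zero_left hzero).symm⟩
end

section
/- Let d ≥ 1 be a natural number, let ζ_d ∈ ℂ be a primitive d-th root of unity, and let ℤ[ζ_d] denote the subring of ℂ generated by ζ_d. Then the following statements are equivalent: (i) for every n ≥ 1, the set of restrictions to the band B_n = {(i,j) ∈ ℤ² : i ≤ j ≤ i+n+3} of frieze patterns of height n over ℤ[ζ_d] \ {0} is finite; (ii) ℤ[ζ_d] is a discrete subset of ℂ (it has no accumulation point in ℂ); (iii) the group of units of the ring ℤ[ζ_d] is finite; (iv) d ∈ {1, 2, 3, 4, 6}. -/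
open Complex ComplexConjugate Metric Filter

lemma exists_eq_intCast_add_intCast_mul_of_mem_closure {ζ : ℂ} {p q : ℤ}
    (hζ : ζ ^ 2 = p + q * ζ) {x : ℂ} (hx : x ∈ Subring.closure {ζ}) :
    ∃ a b : ℤ, x = a + b * ζ := by
  induction hx using Subring.closure_induction with
  | mem y hy => exact ⟨0, 1, by rw [Set.mem_singleton_iff.mp hy]; push_cast; ring⟩
  | zero => exact ⟨0, 0, by push_cast; ring⟩
  | one => exact ⟨1, 0, by push_cast; ring⟩
  | add y z _ _ ihy ihz =>
    obtain ⟨a, b, rfl⟩ := ihy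
    obtain ⟨a', b', rfl⟩ := ihz
    exact ⟨a + a', b + b', by push_cast; ring⟩
  | neg y _ ih =>
    obtain ⟨a, b, rfl⟩ := ih
    exact ⟨-a, -b, by push_cast; ring⟩
  | mul y z _ _ ihy ihz =>
    obtain ⟨a, b, rfl⟩ := ihy
    obtain ⟨a', b', rfl⟩ := ihz
    exact ⟨a * a' + b * b' * p, a * b' + a' * b + b * b' * q, by
      push_cast; linear_combination (b * b' : ℂ) * hζ⟩

lemma normSq_intCast_add_intCast_mul {ζ : ℂ} {t : ℤ} (hζ : ‖ζ‖ = 1)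
    (ht : ζ ^ 2 = t * ζ - 1) (a b : ℤ) :
    normSq (a + b * ζ) = ((a ^ 2 + t * a * b + b ^ 2 : ℤ) : ℂ) := by
  have hconj : ζ * conj ζ = 1 := by rw [mul_conj', hζ]; norm_num
  have hconj' : conj ζ = t - ζ := by
    have hζ0 : ζ ≠ 0 := by rintro rfl; simp at hζ
    refine mul_left_cancel₀ hζ0 ?_
    linear_combination hconj + ht
  rw [← mul_conj, map_add, map_mul, hconj']
  simp only [map_intCast]
  push_cast
  linear_combination -(b ^ 2 : ℂ) * ht

lemma one_le_norm_of_mem_closure {ζ : ℂ} {t : ℤ} (hζ : ‖ζ‖ = 1) (ht : ζ ^ 2 = t * ζ - 1)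
    {x : ℂ} (hx : x ∈ Subring.closure {ζ}) (hx0 : x ≠ 0) : 1 ≤ ‖x‖ := by
  obtain ⟨a, b, rfl⟩ := exists_eq_intCast_add_intCast_mul_of_mem_closure
    (p := -1) (q := t) (by push_cast; linear_combination ht) hx
  have hnorm := normSq_intCast_add_intCast_mul hζ ht a b
  norm_cast at hnorm
  have hpos : 0 < a ^ 2 + t * a * b + b ^ 2 := by
    exact_mod_cast hnorm ▸ normSq_pos.mpr hx0
  have : (1 : ℝ) ≤ ‖(a + b * ζ : ℂ)‖ ^ 2 := by
    rw [← normSq_eq_norm_sq, hnorm]; exact_mod_cast hpos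
  nlinarith [norm_nonneg (a + b * ζ : ℂ)]

lemma IsPrimitiveRoot.exists_sq_eq_intCast_mul_sub_one {ζ : ℂ} {d : ℕ}
    (hζ : IsPrimitiveRoot ζ d) (hd : d ∈ ({1, 2, 3, 4, 6} : Set ℕ)) :
    ∃ t : ℤ, ζ ^ 2 = t * ζ - 1 := by
  simp only [Set.mem_insert_iff, Set.mem_singleton_iff] at hd
  rcases hd with rfl | rfl | rfl | rfl | rfl
  · exact ⟨2, by rw [IsPrimitiveRoot.one_right_iff.mp hζ]; norm_num⟩
  · exact ⟨-2, by rw [hζ.eq_neg_one_of_two_right]; norm_num⟩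
  · refine ⟨-1, ?_⟩
    have := hζ.geom_sum_eq_zero (by norm_num)
    simp only [Finset.sum_range_succ, Finset.sum_range_zero] at this
    push_cast; linear_combination this
  · have := (hζ.pow_of_dvd two_ne_zero (by norm_num)).eq_neg_one_of_two_right
    exact ⟨0, by push_cast; linear_combination this⟩
  · have h3 := (hζ.pow_of_dvd three_ne_zero (by norm_num)).eq_neg_one_of_two_right
    have h2 := (hζ.pow_of_dvd two_ne_zero (by norm_num)).geom_sum_eq_zero (by norm_num)
    simp only [Finset.sum_range_succ, Finset.sum_range_zero] at h2
    exact ⟨1, by push_cast; linear_combination h2 - ζ * h3⟩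

lemma pairwise_one_le_dist_of_one_le_norm {E A : Type*} [NormedAddCommGroup E] [SetLike A E]
    [AddSubgroupClass A E] {G : A} (hG : ∀ x ∈ G, x ≠ 0 → 1 ≤ ‖x‖) :
    (G : Set E).Pairwise (1 ≤ dist · ·) := fun x hx y hy hxy =>
  (hG _ (sub_mem hx hy) (sub_ne_zero.mpr hxy)).trans_eq (dist_eq_norm x y).symm

lemma not_accPt_of_pairwise_one_le_dist {X : Type*} [MetricSpace X] {s : Set X}
    (hs : s.Pairwise (1 ≤ dist · ·)) (x : X) : ¬ AccPt x (𝓟 s) := by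
  intro hx
  rw [accPt_iff_nhds] at hx
  obtain ⟨y, ⟨hyx, hys⟩, hy⟩ := hx _ (ball_mem_nhds x one_half_pos)
  obtain ⟨z, ⟨hzx, hzs⟩, -⟩ := hx _ (ball_mem_nhds x (dist_pos.mpr hy))
  rw [mem_ball] at hyx hzx
  have hzy : z ≠ y := fun h => by rw [h] at hzx; exact lt_irrefl _ hzx
  linarith [hs hzs hys hzy, dist_triangle_right z y x]

lemma finite_inter_closedBall_of_forall_not_accPt {X : Type*} [PseudoMetricSpace X]
    [ProperSpace X] {s : Set X} (hs : ∀ x, ¬ AccPt x (𝓟 s)) (c : X) (r : ℝ) :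
    (s ∩ closedBall c r).Finite := by
  by_contra hinf
  obtain ⟨x, -, hx⟩ := Set.Infinite.exists_accPt_of_subset_isCompact hinf
    (isCompact_closedBall c r) Set.inter_subset_right
  exact hs x (hx.mono (principal_mono.mpr Set.inter_subset_left))

lemma Subring.finite_units_of_finite_inter_closedBall {R : Subring ℂ}
    (hR : ((R : Set ℂ) ∩ closedBall 0 1).Finite) : Finite Rˣ := by
  set A : Set Rˣ := {u | ‖((u : R) : ℂ)‖ ≤ 1}
  have hA : A.Finite := by
    refine (hR.preimage (f := fun u : Rˣ => ((u : R) : ℂ)) ?_).subset ?_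
    · exact fun u _ v _ h => Units.ext (Subtype.ext h)
    · intro u hu
      exact ⟨u.1.2, mem_closedBall_zero_iff.mpr hu⟩
  refine Set.finite_univ_iff.mp ((hA.union hA.inv).subset fun u _ => ?_)
  have hmul : ‖((u : R) : ℂ)‖ * ‖(((u⁻¹ : Rˣ) : R) : ℂ)‖ = 1 := by
    rw [← norm_mul, ← Subring.coe_mul, Units.mul_inv, Subring.coe_one, norm_one]
  by_cases hu : ‖((u : R) : ℂ)‖ ≤ 1
  · exact Or.inl hu
  · right
    show ‖(((u⁻¹ : Rˣ) : R) : ℂ)‖ ≤ 1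
    nlinarith [norm_nonneg (((u⁻¹ : Rˣ) : R) : ℂ)]

lemma Subring.norm_eq_one_of_finite_units {R : Subring ℂ} [Finite Rˣ] (u : Rˣ) :
    ‖((u : R) : ℂ)‖ = 1 := by
  obtain ⟨n, hn, hu⟩ := (isOfFinOrder_of_finite u).exists_pow_eq_one
  refine norm_eq_one_of_pow_eq_one ?_ hn.ne'
  rw [← Subring.coe_pow, ← Units.val_pow_eq_pow_val, hu, Units.val_one, Subring.coe_one]

lemma Complex.eq_or_mul_eq_one_of_norm_sub_one_eq {η ξ : ℂ} (hη : ‖η‖ = 1) (hξ : ‖ξ‖ = 1)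
    (h : ‖ξ - 1‖ = ‖η - 1‖) : ξ = η ∨ ξ * η = 1 := by
  have hη' : η * conj η = 1 := by rw [mul_conj', hη]; norm_num
  have hξ' : ξ * conj ξ = 1 := by rw [mul_conj', hξ]; norm_num
  have hsub : (ξ - 1) * conj (ξ - 1) = (η - 1) * conj (η - 1) := by rw [mul_conj', mul_conj', h]
  simp only [map_sub, map_one] at hsub
  have : (ξ - η) * (ξ * η - 1) = 0 := by
    linear_combination (-(ξ * η)) * hsub + (ξ - η * ξ) * hη' + (η * ξ - η) * hξ'
  rcases mul_eq_zero.mp this with h | h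
  · exact Or.inl (sub_eq_zero.mp h)
  · exact Or.inr (sub_eq_zero.mp h)

lemma Subring.exists_unit_mul_sub_one_eq {R : Subring ℂ} {η : ℂ} (hη : η ∈ R) (hη_ne : η ≠ 1)
    {k l : ℕ} (hl : (η ^ k) ^ l = η) :
    ∃ u : Rˣ, ((u : R) : ℂ) * (η - 1) = η ^ k - 1 := by
  have hu : ∑ j ∈ Finset.range k, η ^ j ∈ R := R.sum_mem fun j _ => R.pow_mem hη j
  have hv : ∑ j ∈ Finset.range l, (η ^ k) ^ j ∈ R :=
    R.sum_mem fun j _ => R.pow_mem (R.pow_mem hη k) j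
  have huv : (∑ j ∈ Finset.range k, η ^ j) * ∑ j ∈ Finset.range l, (η ^ k) ^ j = 1 := by
    refine mul_right_cancel₀ (sub_ne_zero.mpr hη_ne) ?_
    have := geom_sum_mul (η ^ k) l
    rw [hl] at this
    linear_combination (∑ j ∈ Finset.range l, (η ^ k) ^ j) * geom_sum_mul η k + this
  exact ⟨Units.mkOfMulEqOne ⟨_, hu⟩ ⟨_, hv⟩ (Subtype.ext huv), geom_sum_mul η k⟩

lemma Subring.exists_unit_norm_ne_one {R : Subring ℂ} {η : ℂ} (hη : η ∈ R) (hη_norm : ‖η‖ = 1)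
    (hη_ne : η ≠ 1) {k l : ℕ} (hl : (η ^ k) ^ l = η) (hk : η ^ k ≠ η) (hk' : η ^ k * η ≠ 1) :
    ∃ u : Rˣ, ‖((u : R) : ℂ)‖ ≠ 1 := by
  obtain ⟨u, hu⟩ := R.exists_unit_mul_sub_one_eq hη hη_ne hl
  refine ⟨u, fun hu1 => ?_⟩
  have hnorm : ‖η ^ k - 1‖ = ‖η - 1‖ := by rw [← hu, norm_mul, hu1, one_mul]
  rcases eq_or_mul_eq_one_of_norm_sub_one_eq hη_norm (by rw [norm_pow, hη_norm, one_pow]) hnorm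
    with h | h
  · exact hk h
  · exact hk' h

lemma IsPrimitiveRoot.exists_unit_norm_ne_one {ζ : ℂ} {d : ℕ} (hζ : IsPrimitiveRoot ζ d)
    (hd0 : d ≠ 0) (hd : d ∉ ({1, 2, 3, 4, 6} : Set ℕ)) :
    ∃ u : (Subring.closure {ζ})ˣ, ‖((u : Subring.closure {ζ}) : ℂ)‖ ≠ 1 := by
  simp only [Set.mem_insert_iff, Set.mem_singleton_iff, not_or] at hd
  have hmem : ζ ∈ Subring.closure {ζ} := Subring.subset_closure rfl
  have hnorm : ‖ζ‖ = 1 := hζ.norm'_eq_one hd0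
  have hpow (a : ℕ) : ζ ^ a = 1 ↔ d ∣ a := hζ.pow_eq_one_iff_dvd a
  by_cases h4 : 4 ∣ d
  · obtain ⟨m, rfl⟩ : ∃ m, d = 4 * (m + 2) := by
      obtain ⟨m, rfl⟩ := h4
      exact ⟨m - 2, by omega⟩
    -- `2m + 3` is its own inverse modulo `4(m + 2)`
    refine (Subring.closure {ζ}).exists_unit_norm_ne_one hmem hnorm (hζ.ne_one (by omega))
      (k := 2 * m + 3) (l := 2 * m + 3) ?_ ?_ ?_
    · rw [← pow_mul, show (2 * m + 3) * (2 * m + 3) = 4 * (m + 2) * (m + 1) + 1 by ring,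
        pow_succ, pow_mul, hζ.pow_eq_one, one_pow, one_mul]
    · intro h
      have := hζ.pow_inj (by omega) (by omega) (h.trans (pow_one ζ).symm)
      omega
    · rw [← pow_succ, Ne, hpow]
      intro h
      have := Nat.le_of_dvd (by omega) h
      omega
  · obtain ⟨l, q, hl⟩ : ∃ l q, 4 * l = q * d + 2 :=
      ⟨if d % 2 = 1 then (d + 1) / 2 else (d + 2) / 4, if d % 2 = 1 then 2 else 1,
        by split_ifs <;> omega⟩
    have hsq : ζ ^ 2 ≠ 1 := by
      rw [Ne, hpow]
      intro h
      have := Nat.le_of_dvd (by omega) h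
      omega
    refine (Subring.closure {ζ}).exists_unit_norm_ne_one (Subring.pow_mem _ hmem 2)
      (by rw [norm_pow, hnorm, one_pow]) hsq (k := 2) (l := l) ?_ ?_ ?_
    · rw [← pow_mul, ← pow_mul, ← mul_assoc, show 2 * 2 = 4 from rfl, hl, pow_add, mul_comm q,
        pow_mul, hζ.pow_eq_one, one_pow, one_mul]
    · intro h
      refine hsq (mul_left_cancel₀ (pow_ne_zero 2 (hζ.ne_zero hd0)) ?_)
      rw [← sq, h, mul_one]
    · rw [← pow_mul, ← pow_add, Ne, hpow]
      intro h
      have := Nat.le_of_dvd (by omega) h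
      interval_cases d <;> omega

namespace IsFrieze

variable {n : ℕ} {S : Set ℂ} {c : ℤ × ℤ → ℂ}

lemma apply_self (hc : IsFrieze n S c) (i : ℤ) : c (i, i) = 0 := hc.1 i

lemma apply_add_one (hc : IsFrieze n S c) (i : ℤ) : c (i, i + 1) = 1 := hc.2.1 i

lemma apply_add_add_two (hc : IsFrieze n S c) (i : ℤ) : c (i, i + n + 2) = 1 := hc.2.2.1 i

lemma apply_add_add_three (hc : IsFrieze n S c) (i : ℤ) : c (i, i + n + 3) = 0 := hc.2.2.2.1 i

lemma det_eq_one (hc : IsFrieze n S c) {i j : ℤ} (hij : i + 1 ≤ j) (hji : j ≤ i + n + 2) :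
    c (i, j) * c (i + 1, j + 1) - c (i, j + 1) * c (i + 1, j) = 1 :=
  hc.2.2.2.2.2 i j hij hji

lemma mem_insert_one (hc : IsFrieze n S c) {i j : ℤ} (hij : i + 1 ≤ j) (hji : j ≤ i + n + 2) :
    c (i, j) ∈ insert 1 S := by
  rcases hij.eq_or_lt with rfl | hij
  · exact .inl (hc.apply_add_one i)
  rcases hji.eq_or_lt with rfl | hji
  · exact .inl (hc.apply_add_add_two i)
  exact .inr (hc.2.2.2.2.1 i j (by omega) (by omega))

lemma ne_zero (hc : IsFrieze n S c) (hS : 0 ∉ S) {i j : ℤ} (hij : i + 1 ≤ j)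
    (hji : j ≤ i + n + 2) : c (i, j) ≠ 0 := by
  rintro h
  rcases h ▸ hc.mem_insert_one hij hji with h | h
  · exact zero_ne_one h
  · exact hS h

lemma one_le_norm (hc : IsFrieze n S c) (hS : ∀ x ∈ S, 1 ≤ ‖x‖) {i j : ℤ} (hij : i + 1 ≤ j)
    (hji : j ≤ i + n + 2) : 1 ≤ ‖c (i, j)‖ := by
  rcases hc.mem_insert_one hij hji with h | h
  · rw [h, norm_one]
  · exact hS _ h

lemma mem_insert_zero_insert_one (hc : IsFrieze n S c) {i j : ℤ} (hij : i ≤ j)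
    (hji : j ≤ i + n + 3) : c (i, j) ∈ insert 0 (insert 1 S) := by
  rcases hij.eq_or_lt with rfl | hij
  · exact .inl (hc.apply_self i)
  rcases hji.eq_or_lt with rfl | hji
  · exact .inl (hc.apply_add_add_three i)
  exact .inr (hc.mem_insert_one (by omega) (by omega))

lemma norm_le_mul_norm (hc : IsFrieze n S c) (hS : ∀ x ∈ S, 1 ≤ ‖x‖) {i j : ℤ}
    (hij : i + 2 ≤ j) (hji : j ≤ i + n + 3) :
    ‖c (i, j)‖ ≤ (i + n + 3 - j : ℤ) * ‖c (i + 1, j)‖ := by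
  induction j, hji using Int.leInductionDown with
  | base => simp [hc.apply_add_add_three i]
  | pred j hji ih =>
    obtain ⟨j, rfl⟩ : ∃ j', j = j' + 1 := ⟨j - 1, by ring⟩
    rw [add_sub_cancel_right] at hij ⊢
    have hdet := hc.det_eq_one (i := i) (j := j) (by omega) (by omega)
    have hA := hc.one_le_norm hS (i := i + 1) (j := j + 1) (by omega) (by omega)
    have hB := hc.one_le_norm hS (i := i + 1) (j := j) (by omega) (by omega)
    have ih := ih (by omega)
    have ht : (0 : ℝ) ≤ ((i + n + 3 - (j + 1) : ℤ) : ℝ) := by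
      have : 0 ≤ i + n + 3 - (j + 1) := by omega
      exact_mod_cast this
    have key : ‖c (i, j)‖ * ‖c (i + 1, j + 1)‖ ≤ 1 + ‖c (i, j + 1)‖ * ‖c (i + 1, j)‖ := by
      rw [← norm_mul, ← norm_mul, ← norm_one (α := ℂ),
        show c (i, j) * c (i + 1, j + 1) = 1 + c (i, j + 1) * c (i + 1, j) by
          linear_combination hdet]
      exact norm_add_le _ _
    push_cast at ih ht ⊢
    nlinarith

lemma norm_le_pow (hc : IsFrieze n S c) (hS : ∀ x ∈ S, 1 ≤ ‖x‖) {k : ℕ} (hk : k ≤ n + 3)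
    (i : ℤ) : ‖c (i, i + k)‖ ≤ ((n : ℝ) + 1) ^ k := by
  induction k generalizing i with
  | zero => simp [hc.apply_self i]
  | succ k ih =>
    rcases Nat.eq_zero_or_pos k with rfl | hk0
    · simp [hc.apply_add_one i]
    have hstep := hc.norm_le_mul_norm hS (i := i) (j := i + (k + 1 : ℕ)) (by omega) (by omega)
    have ht : ((i + n + 3 - (i + (k + 1 : ℕ)) : ℤ) : ℝ) ≤ n + 1 := by
      have : i + n + 3 - (i + (k + 1 : ℕ)) ≤ n + 1 := by omega
      exact_mod_cast this
    have hrow := ih (by omega) (i + 1)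
    rw [show i + 1 + (k : ℕ) = i + (k + 1 : ℕ) by push_cast; ring] at hrow
    calc ‖c (i, i + (k + 1 : ℕ))‖ ≤ (n + 1) * ‖c (i + 1, i + (k + 1 : ℕ))‖ :=
          hstep.trans (by gcongr)
      _ ≤ (n + 1) * (n + 1) ^ k := by gcongr
      _ = (n + 1) ^ (k + 1) := by ring

lemma norm_le_pow_add_three (hc : IsFrieze n S c) (hS : ∀ x ∈ S, 1 ≤ ‖x‖) {i j : ℤ} (hij : i ≤ j)
    (hji : j ≤ i + n + 3) : ‖c (i, j)‖ ≤ ((n : ℝ) + 1) ^ (n + 3) := by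
  obtain ⟨k, rfl⟩ : ∃ k : ℕ, j = i + k := ⟨(j - i).toNat, by omega⟩
  exact (hc.norm_le_pow hS (by omega) i).trans (pow_le_pow_right₀ (by simp) (by omega))

variable {c₁ c₂ : ℤ × ℤ → ℂ}

lemma eq_of_eq_prev_row (hc₁ : IsFrieze n S c₁) (hc₂ : IsFrieze n S c₂) (hS : 0 ∉ S) {i : ℤ}
    (h : ∀ j, i ≤ j → j ≤ i + n + 3 → c₁ (i, j) = c₂ (i, j)) {j : ℤ} (hij : i + 1 ≤ j)
    (hji : j ≤ i + 1 + n + 3) : c₁ (i + 1, j) = c₂ (i + 1, j) := by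
  induction j, hij using Int.leInduction with
  | base => rw [hc₁.apply_self, hc₂.apply_self]
  | succ j hij ih =>
    rcases (show j + 1 = i + 1 + n + 3 ∨ j ≤ i + n + 2 by omega) with hj | hj
    · rw [hj, hc₁.apply_add_add_three, hc₂.apply_add_add_three]
    -- the frieze rule at `(i, j)` solves for `c (i + 1, j + 1)` since `c (i, j) ≠ 0`
    refine mul_left_cancel₀ (hc₁.ne_zero hS (by omega) hj) ?_
    linear_combination hc₁.det_eq_one (by omega) hj - hc₂.det_eq_one (by omega) hj
      + c₁ (i + 1, j) * h (j + 1) (by omega) (by omega) + c₂ (i, j + 1) * ih (by omega)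
      - c₂ (i + 1, j + 1) * h j (by omega) (by omega)

lemma eq_of_eq_next_row (hc₁ : IsFrieze n S c₁) (hc₂ : IsFrieze n S c₂) (hS : 0 ∉ S) {i : ℤ}
    (h : ∀ j, i + 1 ≤ j → j ≤ i + 1 + n + 3 → c₁ (i + 1, j) = c₂ (i + 1, j)) {j : ℤ}
    (hij : i ≤ j) (hji : j ≤ i + n + 3) : c₁ (i, j) = c₂ (i, j) := by
  induction j, hji using Int.leInductionDown with
  | base => rw [hc₁.apply_add_add_three, hc₂.apply_add_add_three]
  | pred j hji ih =>
    obtain ⟨j, rfl⟩ : ∃ j', j = j' + 1 := ⟨j - 1, by ring⟩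
    rw [add_sub_cancel_right] at hij ⊢
    rcases hij.eq_or_lt with rfl | hij
    · rw [hc₁.apply_self, hc₂.apply_self]
    refine mul_right_cancel₀ (hc₁.ne_zero hS (i := i + 1) (j := j + 1) (by omega) (by omega)) ?_
    linear_combination hc₁.det_eq_one (i := i) (j := j) (by omega) (by omega)
      - hc₂.det_eq_one (i := i) (j := j) (by omega) (by omega)
      + c₁ (i + 1, j) * ih (by omega) + c₂ (i, j + 1) * h j (by omega) (by omega)
      - c₂ (i, j) * h (j + 1) (by omega) (by omega)

lemma eq_of_eq_row_zero (hc₁ : IsFrieze n S c₁) (hc₂ : IsFrieze n S c₂) (hS : 0 ∉ S)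
    (h : ∀ j : ℤ, 0 ≤ j → j ≤ n + 3 → c₁ (0, j) = c₂ (0, j)) {i j : ℤ} (hij : i ≤ j)
    (hji : j ≤ i + n + 3) : c₁ (i, j) = c₂ (i, j) := by
  induction i using Int.induction_on generalizing j with
  | zero => exact h j hij (by omega)
  | succ i ih => exact eq_of_eq_prev_row hc₁ hc₂ hS (fun j => ih) hij hji
  | pred i ih =>
    refine eq_of_eq_next_row hc₁ hc₂ hS (fun j hij hji => ?_) hij hji
    rw [sub_add_cancel] at hij hji ⊢
    exact ih hij (by omega)

end IsFrieze

def bandRestrictions (n : ℕ) (S : Set ℂ) :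
    Set ({p : ℤ × ℤ // p.1 ≤ p.2 ∧ p.2 ≤ p.1 + n + 3} → ℂ) :=
  {g | ∃ c, IsFrieze n S c ∧ ∀ p, g p = c p.1}

lemma finite_bandRestrictions {n : ℕ} {S : Set ℂ} (hS : ∀ x ∈ S, 1 ≤ ‖x‖)
    (hfin : ∀ r, (S ∩ closedBall 0 r).Finite) : (bandRestrictions n S).Finite := by
  have hS0 : 0 ∉ S := fun h => by
    have := hS 0 h
    norm_num at this
  set B : ℝ := ((n : ℝ) + 1) ^ (n + 3)
  set T : Set ℂ := insert 0 (insert 1 S) ∩ closedBall 0 B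
  have hT : T.Finite := by
    refine (((hfin B).insert 1).insert 0).subset ?_
    rintro x ⟨rfl | rfl | hx, hxB⟩
    exacts [.inl rfl, .inr (.inl rfl), .inr (.inr ⟨hx, hxB⟩)]
  -- a frieze is determined by its row `0`, whose entries lie in the finite set `T`
  let row (g : {p : ℤ × ℤ // p.1 ≤ p.2 ∧ p.2 ≤ p.1 + n + 3} → ℂ) (k : Fin (n + 4)) : ℂ :=
    g ⟨(0, k), by omega, by omega⟩
  refine Set.Finite.of_finite_image (f := row) ((Set.Finite.pi fun _ => hT).subset ?_) ?_
  · rintro _ ⟨g, ⟨c, hc, hg⟩, rfl⟩ k -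
    simp only [row, hg]
    exact ⟨hc.mem_insert_zero_insert_one (by omega) (by omega),
      mem_closedBall_zero_iff.mpr (hc.norm_le_pow_add_three hS (by omega) (by omega))⟩
  · rintro g₁ ⟨c₁, hc₁, hg₁⟩ g₂ ⟨c₂, hc₂, hg₂⟩ h
    funext p
    rw [hg₁, hg₂]
    refine hc₁.eq_of_eq_row_zero hc₂ hS0 (fun j hj hj' => ?_) p.2.1 p.2.2
    have := congrFun h ⟨j.toNat, by omega⟩
    simpa only [row, hg₁, hg₂, Int.toNat_of_nonneg hj] using this

def heightOneFrieze (a : ℤ → ℂ) (p : ℤ × ℤ) : ℂ :=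
  if p.2 = p.1 + 2 then a p.1 else if p.2 = p.1 + 1 ∨ p.2 = p.1 + 3 then 1 else 0

lemma isFrieze_heightOneFrieze {S : Set ℂ} {a : ℤ → ℂ} (ha : ∀ i, a i ∈ S)
    (hmul : ∀ i, a i * a (i + 1) = 2) : IsFrieze 1 S (heightOneFrieze a) := by
  refine ⟨fun i => ?_, fun i => ?_, fun i => ?_, fun i => ?_, fun i j hij hji => ?_,
    fun i j hij hji => ?_⟩
  · simp [heightOneFrieze]
  · simp [heightOneFrieze]
  · simp [heightOneFrieze, add_assoc]
  · simp [heightOneFrieze, add_assoc]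
  · obtain rfl : j = i + 2 := by omega
    simpa [heightOneFrieze] using ha i
  · obtain rfl | rfl | rfl : j = i + 1 ∨ j = i + 2 ∨ j = i + 3 := by omega
    all_goals norm_num [heightOneFrieze, add_assoc, hmul]

lemma Subring.finite_units_of_finite_bandRestrictions_one {R : Subring ℂ}
    (hR : (bandRestrictions 1 ((R : Set ℂ) \ {0})).Finite) : Finite Rˣ := by
  let frieze (u : Rˣ) : ℤ × ℤ → ℂ :=
    heightOneFrieze fun i => if Even i then ((u : R) : ℂ) else 2 * ((u⁻¹ : Rˣ) : R)
  have hfrieze (u : Rˣ) : IsFrieze 1 ((R : Set ℂ) \ {0}) (frieze u) := by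
    have hu : ((u : R) : ℂ) * ((u⁻¹ : Rˣ) : R) = 1 := by
      rw [← Subring.coe_mul, Units.mul_inv, Subring.coe_one]
    refine isFrieze_heightOneFrieze (fun i => ?_) (fun i => ?_)
    · split_ifs
      · exact ⟨(u : R).2, left_ne_zero_of_mul_eq_one hu⟩
      · exact ⟨R.mul_mem (ofNat_mem R 2) ((u⁻¹ : Rˣ) : R).2,
          mul_ne_zero two_ne_zero (right_ne_zero_of_mul_eq_one hu)⟩
    · rcases Int.even_or_odd i with hi | hi
      · rw [if_pos hi, if_neg (Int.not_even_iff_odd.mpr hi.add_one)]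
        linear_combination 2 * hu
      · rw [if_neg (Int.not_even_iff_odd.mpr hi), if_pos hi.add_one]
        linear_combination 2 * hu
  have hrange : (Set.range fun u : Rˣ => ((u : R) : ℂ)).Finite := by
    refine (hR.image fun g => g ⟨(0, 2), by norm_num, by norm_num⟩).subset ?_
    rintro _ ⟨u, rfl⟩
    exact ⟨fun p => frieze u p.1, ⟨frieze u, hfrieze u, fun _ => rfl⟩,
      by simp [frieze, heightOneFrieze]⟩
  have := hrange.to_subtype
  exact Finite.of_injective_finite_range fun u v h => Units.ext (Subtype.ext h)

/-- For a primitive `d`-th root of unity `ζ`, the following are equivalent: (i) for every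
`n ≥ 1`, there are only finitely many frieze patterns of height `n` over `ℤ[ζ] \ {0}`
(restricted to the band `B_n`); (ii) `ℤ[ζ]` is discrete in `ℂ`; (iii) the unit group of
`ℤ[ζ]` is finite; (iv) `d ∈ {1, 2, 3, 4, 6}`. -/
theorem stmt9 (d : ℕ) (hd : 1 ≤ d) (ζ : ℂ) (hζ : ζ ^ d = 1)
    (hprim : ∀ k : ℕ, 1 ≤ k → k < d → ζ ^ k ≠ 1) :
    List.TFAE
      [ ∀ n : ℕ, 1 ≤ n →
          {g : {p : ℤ × ℤ // p.1 ≤ p.2 ∧ p.2 ≤ p.1 + n + 3} → ℂ |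
            ∃ c : ℤ × ℤ → ℂ,
              IsFrieze n ((Subring.closure {ζ} : Set ℂ) \ {0}) c ∧
              ∀ p, g p = c p.1}.Finite,
        ∀ x : ℂ, ¬ AccPt x (Filter.principal (Subring.closure {ζ} : Set ℂ)),
        Finite (↥(Subring.closure ({ζ} : Set ℂ)))ˣ,
        d ∈ ({1, 2, 3, 4, 6} : Set ℕ) ] := by
  have hζ' : IsPrimitiveRoot ζ d := .mk_of_lt ζ hd hζ hprim
  have hmin (h4 : d ∈ ({1, 2, 3, 4, 6} : Set ℕ)) :
      ∀ x ∈ Subring.closure {ζ}, x ≠ 0 → 1 ≤ ‖x‖ := by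
    obtain ⟨t, ht⟩ := hζ'.exists_sq_eq_intCast_mul_sub_one h4
    exact fun x => one_le_norm_of_mem_closure (hζ'.norm'_eq_one (by omega)) ht
  have hdisc (h4 : d ∈ ({1, 2, 3, 4, 6} : Set ℕ)) :
      ∀ x : ℂ, ¬ AccPt x (𝓟 (Subring.closure {ζ} : Set ℂ)) :=
    not_accPt_of_pairwise_one_le_dist (pairwise_one_le_dist_of_one_le_norm (hmin h4))
  tfae_have 1 → 3 := fun h1 => Subring.finite_units_of_finite_bandRestrictions_one (h1 1 le_rfl)
  tfae_have 3 → 4 := by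
    intro h3
    by_contra h4
    obtain ⟨u, hu⟩ := hζ'.exists_unit_norm_ne_one (by omega) h4
    exact hu (Subring.norm_eq_one_of_finite_units u)
  tfae_have 4 → 2 := hdisc
  tfae_have 2 → 3 := fun h2 => Subring.finite_units_of_finite_inter_closedBall
    (finite_inter_closedBall_of_forall_not_accPt h2 0 1)
  tfae_have 4 → 1 := fun h4 n _ =>
    finite_bandRestrictions (fun x hx => hmin h4 x hx.1 hx.2) fun r =>
      (finite_inter_closedBall_of_forall_not_accPt (hdisc h4) 0 r).subset
        (Set.inter_subset_inter_left _ Set.sdiff_subset)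
  tfae_finish
end

section
/- Let R be a commutative ring and a, u, v, b, λ ∈ R, and assume that u·v − 1 and λ are invertible in R, with inverses (uv−1)⁻¹ and λ⁻¹. Then: (1) η(a)·η(u)·η(v)·η(b) = η(a + (1−v)·(uv−1)⁻¹)·η(uv−1)·η(b + (1−u)·(uv−1)⁻¹); (2) η(a)·η(u)·η(v)·η(b) = η(a + (λ⁻¹−1)·v·(uv−1)⁻¹)·η(λ·u)·η(λ⁻¹·v)·η(b + (λ−1)·u·(uv−1)⁻¹); (3) for all u ∈ R (no invertibility needed), η(a)·η(0)·η(b) = η(a+u)·η(0)·η(b−u) = −η(a+b). -/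
/-!
Moving `x` into the argument of an `η`-matrix is multiplication by a unitriangular shear on either
side: `η(c + x) = η(c) · [1 0; -x 1] = [1 x; 0 1] · η(c)`. Hence the outer factors `a`, `b` of a
product `η(a) η(u) η(v) η(b)` only absorb shears, and (1) reduces to the factorization
`η(u) η(v) = [1 0; -(1-v)t 1] · η(uv-1) · [1 (1-u)t; 0 1]` with `t = (uv-1)⁻¹`. Rule (2) is (1) applied
twice, since `(λu)(λ⁻¹v) = uv`; rule (3) is the direct computation `η(a) η(0) η(b) = -η(a+b)`.
-/

/-- The matrix `η(c) = !![c, -1; 1, 0]` over a commutative ring. -/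
def etaR {R : Type*} [CommRing R] (c : R) : Matrix (Fin 2) (Fin 2) R := !![c, -1; 1, 0]

section

variable {R : Type*} [CommRing R]

theorem etaR_add_eq_etaR_mul (c x : R) : etaR (c + x) = etaR c * !![1, 0; -x, 1] := by
  ext i j; fin_cases i <;> fin_cases j <;> simp [etaR]

theorem etaR_add_eq_mul_etaR (c x : R) : etaR (c + x) = !![1, x; 0, 1] * etaR c := by
  ext i j; fin_cases i <;> fin_cases j <;> simp [etaR, add_comm]

theorem etaR_mul_etaR_of_mul_eq_one {u v t : R} (ht : (u * v - 1) * t = 1) :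
    etaR u * etaR v =
      !![1, 0; -((1 - v) * t), 1] * etaR (u * v - 1) * !![1, (1 - u) * t; 0, 1] := by
  ext i j; fin_cases i <;> fin_cases j <;> simp [etaR, Matrix.mul_apply, Fin.sum_univ_two]
  · ring
  · linear_combination (u - 1) * ht
  · linear_combination (1 - v) * ht
  · linear_combination ((1 - v) * (1 - u) * t + 1) * ht

theorem etaR_mul_etaR_mul_etaR_mul_etaR_of_mul_eq_one (a u v b : R) {t : R}
    (ht : (u * v - 1) * t = 1) :
    etaR a * etaR u * etaR v * etaR b =
      etaR (a + (1 - v) * t) * etaR (u * v - 1) * etaR (b + (1 - u) * t) := by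
  rw [etaR_add_eq_etaR_mul a, etaR_add_eq_mul_etaR b, Matrix.mul_assoc (etaR a),
    etaR_mul_etaR_of_mul_eq_one ht]
  simp only [Matrix.mul_assoc]

theorem etaR_mul_etaR_zero_mul_etaR (a b : R) : etaR a * etaR 0 * etaR b = -etaR (a + b) := by
  ext i j; fin_cases i <;> fin_cases j <;> simp [etaR, Matrix.mul_apply, Fin.sum_univ_two]

end

/-- Transformation rules for products of `η`-matrices, where `u·v − 1` and `λ` are
invertible in the commutative ring `R`. -/
theorem stmt11 {R : Type*} [CommRing R] (a u v b l : R)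
    [Invertible (u * v - 1)] [Invertible l] :
    (etaR a * etaR u * etaR v * etaR b =
      etaR (a + (1 - v) * ⅟(u * v - 1)) * etaR (u * v - 1) *
        etaR (b + (1 - u) * ⅟(u * v - 1))) ∧
    (etaR a * etaR u * etaR v * etaR b =
      etaR (a + (⅟l - 1) * v * ⅟(u * v - 1)) * etaR (l * u) * etaR (⅟l * v) *
        etaR (b + (l - 1) * u * ⅟(u * v - 1))) ∧
    (∀ w : R,
      etaR a * etaR 0 * etaR b = etaR (a + w) * etaR 0 * etaR (b - w) ∧
      etaR a * etaR 0 * etaR b = -etaR (a + b)) := by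
  have hscaled : l * u * (⅟l * v) = u * v := by linear_combination u * v * mul_invOf_self l
  have ht' : (l * u * (⅟l * v) - 1) * ⅟(u * v - 1) = 1 := by rw [hscaled]; exact mul_invOf_self _
  refine ⟨etaR_mul_etaR_mul_etaR_mul_etaR_of_mul_eq_one a u v b (mul_invOf_self _), ?_,
    fun w => ⟨?_, etaR_mul_etaR_zero_mul_etaR a b⟩⟩
  · rw [etaR_mul_etaR_mul_etaR_mul_etaR_of_mul_eq_one a u v b (mul_invOf_self _),
      etaR_mul_etaR_mul_etaR_mul_etaR_of_mul_eq_one _ _ _ _ ht', hscaled]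
    exact congrArg₂ (fun x y => etaR x * etaR (u * v - 1) * etaR y) (by ring) (by ring)
  · rw [etaR_mul_etaR_zero_mul_etaR, etaR_mul_etaR_zero_mul_etaR, add_add_sub_cancel]
end

section
/- Let R be a commutative ring, a, b ∈ R, and let u, z ∈ R be invertible with inverses u⁻¹, z⁻¹. Let D(z) denote the diagonal 2×2 matrix with diagonal entries z and z⁻¹. Then D(z⁻¹)·η(a)·η(u)·η(b)·D(z) = η(a·z⁻² − (z⁻²−1)·u⁻¹)·η(u)·η(z²·b − (z²−1)·u⁻¹). -/
/-!
For invertible `u`, the product `η(a) η(u) η(b)` factors as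
`!![1, a - u⁻¹; 0, 1] * !![0, -u⁻¹; u, 0] * η(b - u⁻¹)`. Conjugation by the diagonal
torus scales the two outer parameters, by `z⁻²` and `z²` respectively, and fixes the
antidiagonal middle factor. Reading the same factorization backwards gives the result.
-/

open Matrix

section

variable {R : Type*} [CommRing R]

theorem etaR_mul_etaR_mul_etaR (a u b : R) [Invertible u] :
    etaR a * etaR u * etaR b = !![1, a - ⅟u; 0, 1] * !![0, -⅟u; u, 0] * etaR (b - ⅟u) := by
  have hu : u * ⅟u = 1 := mul_invOf_self u
  ext i j
  fin_cases i <;> fin_cases j <;> simp [etaR, mul_apply, Fin.sum_univ_two]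
  · linear_combination (a + b - ⅟u) * hu
  · linear_combination -hu
  · linear_combination hu

theorem diagonal_mul_unitriangular {x y : R} (hxy : x * y = 1) (c : R) :
    diagonal ![x, y] * !![1, c; 0, 1] = !![1, x ^ 2 * c; 0, 1] * diagonal ![x, y] := by
  ext i j
  fin_cases i <;> fin_cases j <;> simp [mul_apply, Fin.sum_univ_two]
  linear_combination (-x * c) * hxy

theorem diagonal_mul_antidiagonal (x y p q : R) :
    diagonal ![x, y] * !![0, p; q, 0] = !![0, p; q, 0] * diagonal ![y, x] := by
  ext i j
  fin_cases i <;> fin_cases j <;> simp [mul_apply, Fin.sum_univ_two, mul_comm]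

theorem diagonal_mul_etaR_mul_diagonal {x y : R} (hxy : x * y = 1) (c : R) :
    diagonal ![x, y] * etaR c * diagonal ![x, y] = etaR (x ^ 2 * c) := by
  ext i j
  fin_cases i <;> fin_cases j <;> simp [etaR, mul_apply, Fin.sum_univ_two]
  · ring
  · linear_combination hxy
  · linear_combination hxy

end

/-- Conjugating `η(a)·η(u)·η(b)` by the diagonal matrix `D(z) = diag(z, z⁻¹)`:
`D(z⁻¹)·η(a)·η(u)·η(b)·D(z) = η(a·z⁻² − (z⁻²−1)·u⁻¹)·η(u)·η(z²·b − (z²−1)·u⁻¹)`. -/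
theorem stmt12 {R : Type*} [CommRing R] (a b u z : R)
    [Invertible u] [Invertible z] :
    Matrix.diagonal ![⅟z, z] * etaR a * etaR u * etaR b * Matrix.diagonal ![z, ⅟z] =
      etaR (a * (⅟z) ^ 2 - ((⅟z) ^ 2 - 1) * ⅟u) * etaR u *
        etaR (z ^ 2 * b - (z ^ 2 - 1) * ⅟u) := by
  have ha : a * ⅟z ^ 2 - (⅟z ^ 2 - 1) * ⅟u - ⅟u = ⅟z ^ 2 * (a - ⅟u) := by ring
  have hb : z ^ 2 * b - (z ^ 2 - 1) * ⅟u - ⅟u = z ^ 2 * (b - ⅟u) := by ring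
  calc diagonal ![⅟z, z] * etaR a * etaR u * etaR b * diagonal ![z, ⅟z]
      = diagonal ![⅟z, z] * !![1, a - ⅟u; 0, 1] * !![0, -⅟u; u, 0] * etaR (b - ⅟u) *
          diagonal ![z, ⅟z] := by
        rw [Matrix.mul_assoc (diagonal _) (etaR a), Matrix.mul_assoc (diagonal _),
          etaR_mul_etaR_mul_etaR]
        simp only [Matrix.mul_assoc]
    _ = !![1, ⅟z ^ 2 * (a - ⅟u); 0, 1] * !![0, -⅟u; u, 0] *
          (diagonal ![z, ⅟z] * etaR (b - ⅟u) * diagonal ![z, ⅟z]) := by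
        rw [diagonal_mul_unitriangular (invOf_mul_self z), Matrix.mul_assoc _ (diagonal _),
          diagonal_mul_antidiagonal]
        simp only [Matrix.mul_assoc]
    _ = !![1, ⅟z ^ 2 * (a - ⅟u); 0, 1] * !![0, -⅟u; u, 0] * etaR (z ^ 2 * (b - ⅟u)) := by
        rw [diagonal_mul_etaR_mul_diagonal (mul_invOf_self z)]
    _ = etaR (a * (⅟z) ^ 2 - ((⅟z) ^ 2 - 1) * ⅟u) * etaR u *
          etaR (z ^ 2 * b - (z ^ 2 - 1) * ⅟u) := by
        rw [etaR_mul_etaR_mul_etaR, ha, hb]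
end

section
/- Let m be an even positive integer, let (c₁,…,c_m) ∈ ℂ^m be a quiddity cycle, and let t ∈ ℂ with t ≠ 0. Define c'_k = t·c_k for k odd and c'_k = t⁻¹·c_k for k even, 1 ≤ k ≤ m. Then: (a) (c'₁,…,c'_m) is a quiddity cycle; (b) extending both sequences periodically with period m to all k ∈ ℤ, for all integers i ≤ j the (1,1)-entry of η(c'_i)·η(c'_{i+1})⋯η(c'_j) is zero if and only if the (1,1)-entry of η(c_i)·η(c_{i+1})⋯η(c_j) is zero (so the frieze patterns corresponding to (c₁,…,c_m) and (c'₁,…,c'_m) have their zero entries at exactly the same positions). -/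
open Matrix

theorem List.prod_range_map_mul_eq_mul_prod {M : Type*} [Monoid M] {f g D : ℕ → M}
    (h : ∀ k, f k * D (k + 1) = D k * g k) (n : ℕ) :
    ((List.range n).map f).prod * D n = D 0 * ((List.range n).map g).prod := by
  induction n with
  | zero => simp
  | succ n ih =>
    simp only [List.range_succ, List.map_append, List.prod_append, List.map_singleton,
      List.prod_singleton]
    rw [mul_assoc, h, ← mul_assoc, ih, mul_assoc]

theorem Matrix.apply_eq_zero_iff_of_mul_diagonal_eq {n R : Type*} [Fintype n] [DecidableEq n]
    [Semiring R] [NoZeroDivisors R] {A B : Matrix n n R} {u v : n → R}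
    (h : A * diagonal u = diagonal v * B) {i j : n} (hu : u j ≠ 0) (hv : v i ≠ 0) :
    A i j = 0 ↔ B i j = 0 := by
  have hij : A i j * u j = v i * B i j := by
    simpa only [mul_diagonal, diagonal_mul] using congrFun (congrFun h i) j
  constructor
  · intro hA
    rw [hA, zero_mul, eq_comm, mul_eq_zero] at hij
    exact hij.resolve_left hv
  · intro hB
    rw [hB, mul_zero, mul_eq_zero] at hij
    exact hij.resolve_right hu

theorem eq_neg_one_of_mul_eq_neg {R : Type*} [Ring R] {x u : R} (hu : IsUnit u)
    (h : x * u = u * -1) : x = -1 := by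
  rw [mul_neg_one, ← neg_one_mul] at h
  exact hu.mul_left_injective h

/-- The diagonal of `D_k`. -/
def parityWeights (t : ℂ) (k : ℤ) : Fin 2 → ℂ := if Odd k then ![t, 1] else ![1, t]

theorem parityWeights_add_even (t : ℂ) (k : ℤ) {m : ℤ} (hm : Even m) :
    parityWeights t (k + m) = parityWeights t k := by
  simp [parityWeights, Int.odd_add, hm]

theorem parityWeights_zero_ne_zero {t : ℂ} (ht : t ≠ 0) (k : ℤ) : parityWeights t k 0 ≠ 0 := by
  unfold parityWeights
  split_ifs <;> simp [ht]

theorem isUnit_diagonal_parityWeights {t : ℂ} (ht : t ≠ 0) (k : ℤ) :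
    IsUnit (diagonal (parityWeights t k)) := by
  rw [isUnit_diagonal, Pi.isUnit_iff]
  unfold parityWeights
  intro i
  split_ifs <;> fin_cases i <;> simp [ht]

theorem eta_mul_diagonal_parityWeights {t : ℂ} (ht : t ≠ 0) (a : ℂ) (k : ℤ) :
    eta ((if Odd k then t else t⁻¹) * a) * diagonal (parityWeights t (k + 1)) =
      diagonal (parityWeights t k) * eta a := by
  rcases Int.even_or_odd k with hk | hk
  · have hk' : ¬Odd k := Int.not_odd_iff_even.mpr hk
    simp only [parityWeights, hk', hk.add_one, if_true, if_false]
    ext i j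
    fin_cases i <;> fin_cases j <;> simp [eta, ht, mul_right_comm t⁻¹ a]
  · have hk' : ¬Odd (k + 1) := Int.not_odd_iff_even.mpr hk.add_one
    simp only [parityWeights, hk', hk, if_true, if_false]
    ext i j
    fin_cases i <;> fin_cases j <;> simp [eta]

theorem stmt13_general (m : ℕ) (hme : Even m) (c : ℤ → ℂ)
    (hq : ((List.range m).map (fun k => eta (c (1 + k)))).prod = -1)
    (t : ℂ) (ht : t ≠ 0)
    (c' : ℤ → ℂ)
    (hc' : ∀ k : ℤ, c' k = if Odd k then t * c k else t⁻¹ * c k) :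
    (((List.range m).map (fun k => eta (c' (1 + k)))).prod = -1) ∧
    (∀ i j : ℤ, i ≤ j →
      ((((List.range (j - i + 1).toNat).map (fun k => eta (c' (i + k)))).prod 0 0 = 0) ↔
        (((List.range (j - i + 1).toNat).map (fun k => eta (c (i + k)))).prod 0 0 = 0))) := by
  have telescope (i : ℤ) (n : ℕ) :
      ((List.range n).map fun k : ℕ => eta (c' (i + k))).prod *
          diagonal (parityWeights t (i + n)) =
        diagonal (parityWeights t i) * ((List.range n).map fun k : ℕ => eta (c (i + k))).prod := by
    have step (k : ℕ) : eta (c' (i + k)) * diagonal (parityWeights t (i + (k + 1 : ℕ))) =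
        diagonal (parityWeights t (i + k)) * eta (c (i + k)) := by
      rw [hc', ← ite_mul, Nat.cast_succ, ← add_assoc]
      exact eta_mul_diagonal_parityWeights ht _ _
    simpa using List.prod_range_map_mul_eq_mul_prod
      (D := fun k : ℕ => diagonal (parityWeights t (i + k))) step n
  -- In the statement `k : ℤ`, so `List.range m` is coerced to `List ℤ` through the list monad.
  simp only [List.bind_eq_flatMap, List.pure_def, ← List.map_eq_flatMap, List.map_map,
    Function.comp_def] at hq ⊢
  refine ⟨?_, fun i j _ => ?_⟩
  · have h := telescope 1 m
    rw [hq, parityWeights_add_even t 1 (by exact_mod_cast hme)] at h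
    exact eq_neg_one_of_mul_eq_neg (isUnit_diagonal_parityWeights ht 1) h
  · exact apply_eq_zero_iff_of_mul_diagonal_eq (telescope i _)
      (parityWeights_zero_ne_zero ht _) (parityWeights_zero_ne_zero ht _)

/-- For an even `m`, a quiddity cycle `(c₁, …, c_m)` (extended `m`-periodically to `ℤ`) and
`t ≠ 0`, the sequence `c'_k = t·c_k` (`k` odd), `c'_k = t⁻¹·c_k` (`k` even) is again a
quiddity cycle, and the corresponding frieze patterns have their zero entries at exactly
the same positions. -/
theorem stmt13 (m : ℕ) (hm : 0 < m) (hme : Even m) (c : ℤ → ℂ)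
    (hper : ∀ k : ℤ, c (k + m) = c k)
    (hq : ((List.range m).map (fun k => eta (c (1 + k)))).prod = -1)
    (t : ℂ) (ht : t ≠ 0)
    (c' : ℤ → ℂ)
    (hc' : ∀ k : ℤ, c' k = if Odd k then t * c k else t⁻¹ * c k) :
    (((List.range m).map (fun k => eta (c' (1 + k)))).prod = -1) ∧
    (∀ i j : ℤ, i ≤ j →
      ((((List.range (j - i + 1).toNat).map (fun k => eta (c' (i + k)))).prod 0 0 = 0) ↔
        (((List.range (j - i + 1).toNat).map (fun k => eta (c (i + k)))).prod 0 0 = 0))) :=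
  stmt13_general m hme c hq t ht c' hc'
end

section
/- Let m be an odd positive integer and let (c₁,…,c_m) ∈ ℂ^m be a quiddity cycle such that for every i ∈ {1,…,m} (with c_{m+1} := c₁) either c_i·c_{i+1} = 1 or c_i = c_{i+1} = 0. Then c_i = 1 for all i and m ≡ 3 (mod 6). -/
lemma apply_add_two_mul_eq {α : Type*} {c : ℕ → α} {m i : ℕ}
    (hstep : ∀ j, 1 ≤ j → j + 2 ≤ m → c (j + 2) = c j) (hi : 1 ≤ i) :
    ∀ k, i + 2 * k ≤ m → c (i + 2 * k) = c i := by
  intro k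
  induction k with
  | zero => simp
  | succ k ih =>
    intro hk
    rw [show i + 2 * (k + 1) = i + 2 * k + 2 by ring, hstep (i + 2 * k) (by omega) (by omega),
      ih (by omega)]

section Cyclic

variable {M : Type*} [CommMonoidWithZero M] [Nontrivial M]

lemma eq_of_mul_eq_one_or_both_zero {x y z : M} (hxy : x * y = 1 ∨ (x = 0 ∧ y = 0))
    (hyz : y * z = 1 ∨ (y = 0 ∧ z = 0)) : x = z := by
  rcases hxy with hxy | ⟨hx, hy⟩ <;> rcases hyz with hyz | ⟨hy', hz⟩
  · calc x = x * (y * z) := by rw [hyz, mul_one]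
      _ = z := by rw [← mul_assoc, hxy, one_mul]
  · simp [hy'] at hxy
  · simp [hy] at hyz
  · rw [hx, hz]

lemma eq_first_of_cyclic_mul_eq_one_or_both_zero {m : ℕ} (hmo : Odd m) {c : ℕ → M}
    (hcond : ∀ i : ℕ, 1 ≤ i → i < m → (c i * c (i + 1) = 1 ∨ (c i = 0 ∧ c (i + 1) = 0)))
    (hwrap : c m * c 1 = 1 ∨ (c m = 0 ∧ c 1 = 0)) :
    ∀ i, 1 ≤ i → i ≤ m → c i = c 1 := by
  have hstep : ∀ j, 1 ≤ j → j + 2 ≤ m → c (j + 2) = c j := fun j hj hjm =>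
    (eq_of_mul_eq_one_or_both_zero (hcond j hj (by omega)) (hcond (j + 1) (by omega) hjm)).symm
  obtain ⟨k, rfl⟩ := hmo
  have hlast : c (2 * k + 1) = c 1 := by
    rw [add_comm]; exact apply_add_two_mul_eq hstep le_rfl k (by omega)
  rintro i hi him
  obtain ⟨j, rfl | rfl⟩ := Nat.even_or_odd' i
  · obtain ⟨j, rfl⟩ : ∃ j', j = j' + 1 := ⟨j - 1, by omega⟩
    have hsecond : c 2 = c 1 :=
      (eq_of_mul_eq_one_or_both_zero hwrap (hcond 1 le_rfl (by omega))).symm.trans hlast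
    rw [show 2 * (j + 1) = 2 + 2 * j by ring, apply_add_two_mul_eq hstep (by norm_num) j
      (by omega), hsecond]
  · rw [add_comm]; exact apply_add_two_mul_eq hstep le_rfl j (by omega)

end Cyclic

lemma list_prod_map_eta_of_eq_const {m : ℕ} {c : ℕ → ℂ} {a : ℂ}
    (h : ∀ i, 1 ≤ i → i ≤ m → c i = a) :
    ((List.range m).map (fun k => eta (c (k + 1)))).prod = eta a ^ m := by
  rw [List.prod_eq_pow_card _ (eta a), List.length_map, List.length_range]
  simp only [List.mem_map, List.mem_range]
  rintro _ ⟨k, hk, rfl⟩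
  rw [h (k + 1) (by omega) (by omega)]

lemma neg_one_ne_one_matrix : (-1 : Matrix (Fin 2) (Fin 2) ℂ) ≠ 1 := by
  intro h
  have := congrFun (congrFun h 0) 0
  norm_num at this

lemma eta_zero_sq : eta 0 ^ 2 = -1 := by
  ext i j; fin_cases i <;> fin_cases j <;> simp [eta, sq]

lemma eta_one_pow_three : eta 1 ^ 3 = -1 := by
  ext i j; fin_cases i <;> fin_cases j <;> simp [eta, pow_succ]

lemma eta_neg_one_pow_three : eta (-1) ^ 3 = 1 := by
  ext i j; fin_cases i <;> fin_cases j <;> simp [eta, pow_succ]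

lemma eta_one_sq_ne_one : eta 1 ^ 2 ≠ 1 := by
  intro h; simpa [eta, sq] using congrFun (congrFun h 1) 0

lemma eta_zero_pow_ne_neg_one {m : ℕ} (hm : Odd m) : eta 0 ^ m ≠ -1 := by
  intro h
  apply neg_one_ne_one_matrix
  calc (-1 : Matrix (Fin 2) (Fin 2) ℂ) = (eta 0 ^ 2) ^ m := by rw [eta_zero_sq, hm.neg_one_pow]
    _ = (eta 0 ^ m) ^ 2 := by rw [← pow_mul, ← pow_mul, mul_comm]
    _ = 1 := by rw [h, neg_one_sq]

lemma eta_neg_one_pow_ne_neg_one (m : ℕ) : eta (-1) ^ m ≠ -1 := by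
  intro h
  apply neg_one_ne_one_matrix
  calc (-1 : Matrix (Fin 2) (Fin 2) ℂ) = (eta (-1) ^ m) ^ 3 := by rw [h]; norm_num
    _ = (eta (-1) ^ 3) ^ m := by rw [← pow_mul, ← pow_mul, mul_comm]
    _ = 1 := by rw [eta_neg_one_pow_three, one_pow]

lemma orderOf_eta_one : orderOf (eta 1) = 6 := by
  refine orderOf_eq_of_pow_and_pow_div_prime (by norm_num) ?_ fun p hp hp6 => ?_
  · rw [show 6 = 3 * 2 by rfl, pow_mul, eta_one_pow_three, neg_one_sq]
  · have : p ≤ 6 := Nat.le_of_dvd (by norm_num) hp6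
    obtain rfl | rfl : p = 2 ∨ p = 3 := by interval_cases p <;> norm_num at *
    · rw [show 6 / 2 = 3 by rfl, eta_one_pow_three]; exact neg_one_ne_one_matrix
    · exact eta_one_sq_ne_one

lemma eta_one_pow_eq_neg_one_iff (m : ℕ) : eta 1 ^ m = -1 ↔ m % 6 = 3 := by
  have hfin : IsOfFinOrder (eta 1) := orderOf_pos_iff.mp (by rw [orderOf_eta_one]; norm_num)
  rw [← eta_one_pow_three, hfin.pow_inj_mod, orderOf_eta_one]

theorem stmt14_general (m : ℕ) (hmo : Odd m) (c : ℕ → ℂ)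
    (hq : ((List.range m).map (fun k => eta (c (k + 1)))).prod = -1)
    (hcond : ∀ i : ℕ, 1 ≤ i → i < m →
      (c i * c (i + 1) = 1 ∨ (c i = 0 ∧ c (i + 1) = 0)))
    (hwrap : c m * c 1 = 1 ∨ (c m = 0 ∧ c 1 = 0)) :
    (∀ i : ℕ, 1 ≤ i → i ≤ m → c i = 1) ∧ m % 6 = 3 := by
  have hconst := eq_first_of_cyclic_mul_eq_one_or_both_zero hmo hcond hwrap
  rw [list_prod_map_eta_of_eq_const hconst] at hq
  have hc1 : c 1 * c 1 = 1 ∨ c 1 = 0 := by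
    rw [hconst m hmo.pos le_rfl] at hwrap
    exact hwrap.imp_right And.left
  rcases hc1 with hc1 | hc1
  · rcases mul_self_eq_one_iff.mp hc1 with hc1 | hc1 <;> rw [hc1] at hq hconst
    · exact ⟨hconst, (eta_one_pow_eq_neg_one_iff m).mp hq⟩
    · exact absurd hq (eta_neg_one_pow_ne_neg_one m)
  · rw [hc1] at hq
    exact absurd hq (eta_zero_pow_ne_neg_one hmo)

/-- Let `m` be odd and `(c₁, …, c_m)` a quiddity cycle such that for all `i`
(cyclically, with `c_{m+1} := c₁`) either `c_i·c_{i+1} = 1` or `c_i = c_{i+1} = 0`.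
Then all `c_i = 1` and `m ≡ 3 (mod 6)`. -/
theorem stmt14 (m : ℕ) (hm : 0 < m) (hmo : Odd m) (c : ℕ → ℂ)
    (hq : ((List.range m).map (fun k => eta (c (k + 1)))).prod = -1)
    (hcond : ∀ i : ℕ, 1 ≤ i → i < m →
      (c i * c (i + 1) = 1 ∨ (c i = 0 ∧ c (i + 1) = 0)))
    (hwrap : c m * c 1 = 1 ∨ (c m = 0 ∧ c 1 = 0)) :
    (∀ i : ℕ, 1 ≤ i → i ≤ m → c i = 1) ∧ m % 6 = 3 :=
  stmt14_general m hmo c hq hcond hwrap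
end
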